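/- arXiv:1810.08867 — 4 statements merged into one kernel-verified Lean document; each statement's English description precedes it below -/
import Mathlib

section
/- For any reversible irreducible Markov chain with transition operator P and stationary measure π, and any function f in L²(π), the variance decomposes as Var_π(f) = Var_π(Pf) + E_{P²}(f,f), where E_{P²}(f,f) = (1/2)∫∫ (f(x)-f(y))² P²(x,y) dπ(x) dy is the Dirichlet form of the two-step chain. -/
open MeasureTheory
open scoped ENNReal NNReal

namespace MihailAux

variable {Ω : Type*} [MeasurableSpace Ω] {m : Measure Ω} [SigmaFinite m]

lemma Real.ennnorm_eq_ofReal {r : ℝ} (hr : 0 ≤ r) : (‖r‖₊ : ℝ≥0∞) = ENNReal.ofReal r :=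
  Real.enorm_eq_ofReal hr

lemma ennnorm_integral_le_lintegral_ennnorm {α : Type*} [MeasurableSpace α] {μ : Measure α}
    (f : α → ℝ) : (‖∫ a, f a ∂μ‖₊ : ℝ≥0∞) ≤ ∫⁻ a, ‖f a‖₊ ∂μ :=
  enorm_integral_le_lintegral_enorm f

lemma _root_.Measurable.ennnorm {α : Type*} [MeasurableSpace α] {f : α → ℝ}
    (hf : Measurable f) : Measurable fun a => (‖f a‖₊ : ℝ≥0∞) :=
  hf.nnnorm.coe_nnreal_ennreal

lemma hfi_nnnorm {α : Type*} [MeasurableSpace α] {μ : Measure α} {f : α → ℝ} :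
    HasFiniteIntegral f μ ↔ ∫⁻ a, ‖f a‖₊ ∂μ < ⊤ :=
  Iff.rfl

omit [SigmaFinite m] in
lemma row_one {P : Ω → ℝ} (hP : ∀ y, 0 ≤ P y) (h1 : ∫ y, P y ∂m = 1) :
    ∫⁻ y, ENNReal.ofReal (P y) ∂m = 1 := by
  have hint : Integrable P m := by
    by_contra h; rw [integral_undef h] at h1; norm_num at h1
  rw [← ofReal_integral_eq_lintegral_ofReal hint (Filter.Eventually.of_forall hP), h1,
    ENNReal.ofReal_one]

omit [SigmaFinite m] in
lemma ab_le {a b : ℝ≥0∞} : a * b ≤ a * a + b * b := by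
  rcases le_total a b with h | h
  · exact le_trans (mul_le_mul_left h b) le_add_self
  · exact le_trans (mul_le_mul_right h a) (le_add_right le_rfl)

omit [SigmaFinite m] in
lemma var_expand {μ : Measure Ω} [IsProbabilityMeasure μ] {h : Ω → ℝ}
    (hint : Integrable h μ) (h2int : Integrable (fun x => h x ^ 2) μ) :
    ∫ x, (h x - ∫ z, h z ∂μ) ^ 2 ∂μ = (∫ x, h x ^ 2 ∂μ) - (∫ z, h z ∂μ) ^ 2 := by
  have e : ∀ x, (h x - ∫ z, h z ∂μ) ^ 2
      = h x ^ 2 - (2 * ∫ z, h z ∂μ) * h x + (∫ z, h z ∂μ) ^ 2 := fun x => by ring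
  simp only [e]
  rw [integral_add (show Integrable (fun x => h x ^ 2 - (2 * ∫ z, h z ∂μ) * h x) μ from
      h2int.sub (hint.const_mul _)) (integrable_const _),
    integral_sub h2int (hint.const_mul _), integral_const_mul, integral_const]
  simp [measure_univ]
  ring

omit [SigmaFinite m] in
lemma cs {w φ : Ω → ℝ≥0∞} (hw : Measurable w) (hφ : Measurable φ)
    (h1 : ∫⁻ x, w x ∂m = 1) :
    (∫⁻ x, w x * φ x ∂m) ^ 2 ≤ ∫⁻ x, w x * φ x ^ 2 ∂m := by
  have hpq : Real.HolderConjugate 2 2 := Real.HolderConjugate.two_two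
  have key := ENNReal.lintegral_mul_le_Lp_mul_Lq m hpq
    (f := fun x => (w x) ^ (1/2 : ℝ)) (g := fun x => (w x) ^ (1/2 : ℝ) * φ x)
    (hw.pow_const _).aemeasurable ((hw.pow_const _).mul hφ).aemeasurable
  have e1 : ∀ x, ((fun x => (w x) ^ (1/2 : ℝ)) * fun x => (w x) ^ (1/2 : ℝ) * φ x) x
      = w x * φ x := by
    intro x
    simp only [Pi.mul_apply, ← mul_assoc]
    rw [← ENNReal.rpow_add_of_nonneg _ _ (by norm_num) (by norm_num)]
    norm_num
  have e2 : ∀ x, ((w x) ^ (1/2 : ℝ)) ^ (2 : ℝ) = w x := by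
    intro x
    rw [← ENNReal.rpow_mul]
    norm_num
  have e3 : ∀ x, ((w x) ^ (1/2 : ℝ) * φ x) ^ (2 : ℝ) = w x * φ x ^ 2 := by
    intro x
    rw [ENNReal.mul_rpow_of_nonneg _ _ (by norm_num : (0:ℝ) ≤ 2), e2 x,
      show (2:ℝ) = ((2:ℕ):ℝ) by norm_num, ENNReal.rpow_natCast]
  simp only [e1, e2, e3] at key
  rw [h1, ENNReal.one_rpow, one_mul] at key
  calc (∫⁻ x, w x * φ x ∂m) ^ 2 ≤ ((∫⁻ x, w x * φ x ^2 ∂m) ^ (1/2 : ℝ)) ^ 2 :=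
        pow_le_pow_left' key 2
    _ = ∫⁻ x, w x * φ x ^2 ∂m := by
        rw [← ENNReal.rpow_natCast (((∫⁻ x, w x * φ x ^2 ∂m) ^ (1/2:ℝ))) 2, ← ENNReal.rpow_mul]
        norm_num

lemma Lstat {fπ : Ω → ℝ} (hfπpos : ∀ x, 0 ≤ fπ x) (hfπmeas : Measurable fπ)
    {P : Ω → Ω → ℝ} (hPpos : ∀ x y, 0 ≤ P x y)
    (hPmeas : Measurable fun p : Ω × Ω => P p.1 p.2)
    (hstoch : ∀ x, ∫ y, P x y ∂m = 1)
    (hrev : ∀ x y, fπ x * P x y = fπ y * P y x)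
    {φ : Ω → ℝ≥0∞} (hφ : Measurable φ) :
    ∫⁻ x, (∫⁻ y, ENNReal.ofReal (P x y) * φ y ∂m)
        ∂(m.withDensity fun x => ENNReal.ofReal (fπ x))
      = ∫⁻ y, φ y ∂(m.withDensity fun x => ENNReal.ofReal (fπ x)) := by
  have hPm1 : ∀ x, Measurable fun y => ENNReal.ofReal (P x y) :=
    fun x => (hPmeas.comp (measurable_prodMk_left)).ennreal_ofReal
  have hinner : Measurable fun x => ∫⁻ y, ENNReal.ofReal (P x y) * φ y ∂m := by
    apply Measurable.lintegral_prod_right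
    exact (hPmeas.ennreal_ofReal).mul (hφ.comp measurable_snd)
  rw [lintegral_withDensity_eq_lintegral_mul m hfπmeas.ennreal_ofReal hinner,
    lintegral_withDensity_eq_lintegral_mul m hfπmeas.ennreal_ofReal hφ]
  have step1 : ∀ x, ((fun x => ENNReal.ofReal (fπ x)) * fun x =>
      ∫⁻ y, ENNReal.ofReal (P x y) * φ y ∂m) x
      = ∫⁻ y, ENNReal.ofReal (fπ x) * (ENNReal.ofReal (P x y) * φ y) ∂m := by
    intro x
    simp only [Pi.mul_apply]
    rw [lintegral_const_mul _ (f := fun y => ENNReal.ofReal (P x y) * φ y) ((hPm1 x).mul hφ)]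
  rw [lintegral_congr step1]
  rw [lintegral_lintegral_swap]
  · have step2 : ∀ y, ∫⁻ x, ENNReal.ofReal (fπ x) * (ENNReal.ofReal (P x y) * φ y) ∂m
        = ENNReal.ofReal (fπ y) * φ y := by
      intro y
      have : ∀ x, ENNReal.ofReal (fπ x) * (ENNReal.ofReal (P x y) * φ y)
          = (ENNReal.ofReal (fπ y) * φ y) * ENNReal.ofReal (P y x) := by
        intro x
        rw [← mul_assoc, ← ENNReal.ofReal_mul (hfπpos x), hrev x y,
          ENNReal.ofReal_mul (hfπpos y)]
        ring
      rw [lintegral_congr this,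
        lintegral_const_mul (ENNReal.ofReal (fπ y) * φ y) (hPm1 y),
        row_one (fun z => hPpos y z) (hstoch y), mul_one]
    rw [lintegral_congr step2]
    exact lintegral_congr fun y => rfl
  · apply Measurable.aemeasurable
    exact ((hfπmeas.comp measurable_fst).ennreal_ofReal).mul
      ((hPmeas.ennreal_ofReal).mul ((hφ.comp measurable_snd)))

omit [SigmaFinite m] in
lemma integral_withDensity_ofReal {fπ : Ω → ℝ} (hfπpos : ∀ x, 0 ≤ fπ x)
    (hfπmeas : Measurable fπ) (h : Ω → ℝ) :
    ∫ x, h x ∂(m.withDensity fun x => ENNReal.ofReal (fπ x)) = ∫ x, fπ x * h x ∂m := by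
  rw [show (fun x => ENNReal.ofReal (fπ x)) = (fun x => ((fπ x).toNNReal : ℝ≥0∞)) from rfl,
    integral_withDensity_eq_integral_smul hfπmeas.real_toNNReal h]
  congr 1; ext x
  simp [NNReal.smul_def, Real.coe_toNNReal _ (hfπpos x)]

lemma swap_rev {fπ : Ω → ℝ} (hfπpos : ∀ x, 0 ≤ fπ x) (hfπmeas : Measurable fπ)
    {P : Ω → Ω → ℝ} (hPpos : ∀ x y, 0 ≤ P x y)
    (hPmeas : Measurable fun p : Ω × Ω => P p.1 p.2)
    (hrev : ∀ x y, fπ x * P x y = fπ y * P y x)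
    {G : Ω → Ω → ℝ} (hGmeas : Measurable fun p : Ω × Ω => G p.1 p.2)
    (hfin : ∫⁻ x, (∫⁻ y, ENNReal.ofReal (P x y) * ‖G x y‖₊ ∂m)
        ∂(m.withDensity fun x => ENNReal.ofReal (fπ x)) ≠ ⊤) :
    ∫ x, (∫ y, P x y * G x y ∂m) ∂(m.withDensity fun x => ENNReal.ofReal (fπ x))
      = ∫ y, (∫ x, P y x * G x y ∂m) ∂(m.withDensity fun x => ENNReal.ofReal (fπ x)) := by
  have hKmeas : Measurable fun p : Ω × Ω => fπ p.1 * (P p.1 p.2 * G p.1 p.2) :=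
    (hfπmeas.comp measurable_fst).mul (hPmeas.mul hGmeas)
  have hPx : ∀ x, Measurable fun y => ENNReal.ofReal (P x y) :=
    fun x => (hPmeas.comp measurable_prodMk_left).ennreal_ofReal
  have hGx : ∀ x, Measurable fun y => (‖G x y‖₊ : ℝ≥0∞) :=
    fun x => (hGmeas.comp measurable_prodMk_left).ennnorm
  have hKint : Integrable (Function.uncurry fun x y => fπ x * (P x y * G x y)) (m.prod m) := by
    constructor
    · exact (hKmeas.aestronglyMeasurable : AEStronglyMeasurable
        (Function.uncurry fun x y => fπ x * (P x y * G x y)) (m.prod m))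
    · rw [hfi_nnnorm]
      simp only [Function.uncurry_def]
      rw [lintegral_prod _ hKmeas.ennnorm.aemeasurable]
      have key : ∀ x, ∫⁻ y, (‖fπ x * (P x y * G x y)‖₊ : ℝ≥0∞) ∂m
          = ENNReal.ofReal (fπ x) * ∫⁻ y, ENNReal.ofReal (P x y) * ‖G x y‖₊ ∂m := by
        intro x
        rw [← lintegral_const_mul _ (f := fun y => ENNReal.ofReal (P x y) * (‖G x y‖₊ : ℝ≥0∞))
          ((hPx x).mul (hGx x))]
        congr 1; ext y
        rw [nnnorm_mul, nnnorm_mul, ENNReal.coe_mul, ENNReal.coe_mul,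
          Real.ennnorm_eq_ofReal (hfπpos x), Real.ennnorm_eq_ofReal (hPpos x y)]
      simp only [Function.uncurry_apply_pair, key]
      rw [lintegral_withDensity_eq_lintegral_mul m hfπmeas.ennreal_ofReal
        (Measurable.lintegral_prod_right'
          (f := fun p : Ω × Ω => ENNReal.ofReal (P p.1 p.2) * (‖G p.1 p.2‖₊ : ℝ≥0∞))
          ((hPmeas.ennreal_ofReal).mul
          (hGmeas.ennnorm)))] at hfin
      exact lt_top_iff_ne_top.mpr hfin
  rw [integral_withDensity_ofReal hfπpos hfπmeas, integral_withDensity_ofReal hfπpos hfπmeas]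
  have l1 : ∀ x, fπ x * (∫ y, P x y * G x y ∂m) = ∫ y, fπ x * (P x y * G x y) ∂m :=
    fun x => (integral_const_mul _ _).symm
  have l2 : ∀ y, fπ y * (∫ x, P y x * G x y ∂m) = ∫ x, fπ y * (P y x * G x y) ∂m :=
    fun y => (integral_const_mul _ _).symm
  simp only [l1, l2]
  rw [integral_integral_swap hKint]
  congr 1; ext y; congr 1; ext x
  rw [← mul_assoc, hrev x y, mul_assoc]

end MihailAux

open MihailAux

/-- **Mihail's identity.** For a reversible irreducible Markov chain with transition
density `P` (with respect to a reference measure `m`) and stationary measure `π`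
(with density `fπ` w.r.t. `m`), and any `f ∈ L²(π)`,
`Var_π(f) = Var_π(Pf) + E_{P²}(f,f)`, where `E_{P²}` is the Dirichlet form of the
two-step chain. -/
theorem mihail_identity
    {Ω : Type*} [MeasurableSpace Ω] (m : Measure Ω) [SigmaFinite m]
    (fπ : Ω → ℝ) (hfπpos : ∀ x, 0 ≤ fπ x) (hfπmeas : Measurable fπ)
    (π : Measure Ω) (hπ : π = m.withDensity (fun x => ENNReal.ofReal (fπ x)))
    (hπprob : IsProbabilityMeasure π)
    (P : Ω → Ω → ℝ) (hPpos : ∀ x y, 0 ≤ P x y)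
    (hPmeas : Measurable fun p : Ω × Ω => P p.1 p.2)
    (hstoch : ∀ x, ∫ y, P x y ∂m = 1)
    -- reversibility of the chain with respect to `π`
    (hrev : ∀ x y, fπ x * P x y = fπ y * P y x)
    -- irreducibility: `Pt t` is the `t`-step transition density, and from every state
    -- every set of positive `π`-measure is eventually reached with positive probability
    (Pt : ℕ → Ω → Ω → ℝ)
    (hPt1 : Pt 1 = P)
    (hPtsucc : ∀ t x y, 1 ≤ t → Pt (t + 1) x y = ∫ z, Pt t x z * P z y ∂m)
    (hirr : ∀ B : Set Ω, MeasurableSet B → 0 < π B →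
      ∀ x, ∃ t : ℕ, 1 ≤ t ∧ 0 < ∫ y in B, Pt t x y ∂m)
    -- `f ∈ L²(π)`
    (f : Ω → ℝ) (hfmeas : Measurable f) (hf : MemLp f 2 π) :
    (∫ x, (f x - ∫ z, f z ∂π) ^ 2 ∂π)
      = (∫ x, ((∫ y, P x y * f y ∂m) - ∫ z, (∫ y, P z y * f y ∂m) ∂π) ^ 2 ∂π)
        + (1 / 2) * ∫ x, (∫ y, (f x - f y) ^ 2 * (∫ z, P x z * P z y ∂m) ∂m) ∂π := by
    -- basic measurability
  have hPx : ∀ x, Measurable fun y => P x y := fun x => hPmeas.comp measurable_prodMk_left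
  have hPxE : ∀ x, Measurable fun y => ENNReal.ofReal (P x y) := fun x => (hPx x).ennreal_ofReal
  have hrow : ∀ x, ∫⁻ y, ENNReal.ofReal (P x y) ∂m = 1 :=
    fun x => row_one (hPpos x) (hstoch x)
  have Lstat' : ∀ φ : Ω → ℝ≥0∞, Measurable φ →
      ∫⁻ x, (∫⁻ y, ENNReal.ofReal (P x y) * φ y ∂m) ∂π = ∫⁻ y, φ y ∂π := by
    intro φ hφ; rw [hπ]; exact Lstat hfπpos hfπmeas hPpos hPmeas hstoch hrev hφ
  have SWAP' : ∀ G : Ω → Ω → ℝ, (Measurable fun p : Ω × Ω => G p.1 p.2) →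
      (∫⁻ x, (∫⁻ y, ENNReal.ofReal (P x y) * ‖G x y‖₊ ∂m) ∂π ≠ ⊤) →
      ∫ x, (∫ y, P x y * G x y ∂m) ∂π = ∫ y, (∫ x, P y x * G x y ∂m) ∂π := by
    intro G hG hfin; rw [hπ] at hfin ⊢
    exact swap_rev hfπpos hfπmeas hPpos hPmeas hrev hG hfin
  have mg : Measurable fun x => ∫ y, P x y * f y ∂m := by
    apply StronglyMeasurable.measurable
    exact MeasureTheory.StronglyMeasurable.integral_prod_right
      (f := fun x y => P x y * f y) (hPmeas.mul (hfmeas.comp measurable_snd)).stronglyMeasurable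
  have hPP : Measurable fun q : (Ω × Ω) × Ω => P q.1.1 q.2 * P q.2 q.1.2 :=
    (hPmeas.comp ((measurable_fst.comp measurable_fst).prodMk measurable_snd)).mul
      (hPmeas.comp (measurable_snd.prodMk (measurable_snd.comp measurable_fst)))
  have mQ : Measurable fun p : Ω × Ω => ∫ z, P p.1 z * P z p.2 ∂m := by
    apply StronglyMeasurable.measurable
    exact StronglyMeasurable.integral_prod_right' hPP.stronglyMeasurable
  have hPPE : Measurable fun q : (Ω × Ω) × Ω =>
      ENNReal.ofReal (P q.1.1 q.2) * ENNReal.ofReal (P q.2 q.1.2) :=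
    ((hPmeas.comp ((measurable_fst.comp measurable_fst).prodMk measurable_snd)).ennreal_ofReal).mul
      ((hPmeas.comp (measurable_snd.prodMk (measurable_snd.comp measurable_fst))).ennreal_ofReal)
  have mW : Measurable fun p : Ω × Ω =>
      ∫⁻ z, ENNReal.ofReal (P p.1 z) * ENNReal.ofReal (P z p.2) ∂m :=
    Measurable.lintegral_prod_right' hPPE
  -- integrability of f
  have hfint : Integrable f π := hf.integrable one_le_two
  have hf2int : Integrable (fun x => f x ^ 2) π := hf.integrable_sq
  have hf2L : ∫⁻ x, ENNReal.ofReal (f x ^ 2) ∂π ≠ ⊤ := by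
    have e : ∀ x, ENNReal.ofReal (f x ^ 2) = (‖f x ^ 2‖₊ : ℝ≥0∞) :=
      fun x => (Real.ennnorm_eq_ofReal (sq_nonneg _)).symm
    rw [lintegral_congr e]
    exact hf2int.2.ne
  have esq : ∀ a : ℝ, ENNReal.ofReal (a ^ 2) = (‖a‖₊ : ℝ≥0∞) ^ 2 := fun a => by
    rw [← Real.ennnorm_eq_ofReal (sq_nonneg a), nnnorm_pow, ENNReal.coe_pow]
  -- Cauchy-Schwarz for g
  have hgCS : ∀ x, ENNReal.ofReal ((∫ y, P x y * f y ∂m) ^ 2)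
      ≤ ∫⁻ y, ENNReal.ofReal (P x y) * ENNReal.ofReal (f y ^ 2) ∂m := by
    intro x
    calc ENNReal.ofReal ((∫ y, P x y * f y ∂m) ^ 2)
        = (‖∫ y, P x y * f y ∂m‖₊ : ℝ≥0∞) ^ 2 := esq _
      _ ≤ (∫⁻ y, (‖P x y * f y‖₊ : ℝ≥0∞) ∂m) ^ 2 :=
          pow_le_pow_left' (ennnorm_integral_le_lintegral_ennnorm _) 2
      _ = (∫⁻ y, ENNReal.ofReal (P x y) * (‖f y‖₊ : ℝ≥0∞) ∂m) ^ 2 := by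
          congr 1
          apply lintegral_congr; intro y
          rw [nnnorm_mul, ENNReal.coe_mul, Real.ennnorm_eq_ofReal (hPpos x y)]
      _ ≤ ∫⁻ y, ENNReal.ofReal (P x y) * (‖f y‖₊ : ℝ≥0∞) ^ 2 ∂m :=
          cs (hPxE x) hfmeas.ennnorm (hrow x)
      _ = ∫⁻ y, ENNReal.ofReal (P x y) * ENNReal.ofReal (f y ^ 2) ∂m := by
          apply lintegral_congr; intro y; rw [esq (f y)]
  have hg2L : ∫⁻ x, ENNReal.ofReal ((∫ y, P x y * f y ∂m) ^ 2) ∂π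
      ≤ ∫⁻ x, ENNReal.ofReal (f x ^ 2) ∂π := by
    refine le_trans (lintegral_mono hgCS) (le_of_eq ?_)
    exact Lstat' (fun y => ENNReal.ofReal (f y ^ 2)) (hfmeas.pow_const 2).ennreal_ofReal
  -- integrability of g
  have hgbound : ∀ x, (‖∫ y, P x y * f y ∂m‖₊ : ℝ≥0∞)
      ≤ ∫⁻ y, ENNReal.ofReal (P x y) * (‖f y‖₊ : ℝ≥0∞) ∂m := by
    intro x
    refine le_trans (ennnorm_integral_le_lintegral_ennnorm _) (le_of_eq ?_)
    apply lintegral_congr; intro y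
    rw [nnnorm_mul, ENNReal.coe_mul, Real.ennnorm_eq_ofReal (hPpos x y)]
  have hgint : Integrable (fun x => ∫ y, P x y * f y ∂m) π := by
    refine ⟨mg.aestronglyMeasurable, ?_⟩
    rw [hfi_nnnorm]
    calc ∫⁻ x, (‖∫ y, P x y * f y ∂m‖₊ : ℝ≥0∞) ∂π
        ≤ ∫⁻ x, (∫⁻ y, ENNReal.ofReal (P x y) * (‖f y‖₊ : ℝ≥0∞) ∂m) ∂π :=
          lintegral_mono hgbound
      _ = ∫⁻ y, (‖f y‖₊ : ℝ≥0∞) ∂π := Lstat' _ hfmeas.ennnorm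
      _ < ⊤ := hfint.2
  have hg2int : Integrable (fun x => (∫ y, P x y * f y ∂m) ^ 2) π := by
    refine ⟨(mg.pow_const 2).aestronglyMeasurable, ?_⟩
    rw [hfi_nnnorm]
    have e : ∀ x : Ω, (‖(∫ y, P x y * f y ∂m) ^ 2‖₊ : ℝ≥0∞)
        = ENNReal.ofReal ((∫ y, P x y * f y ∂m) ^ 2) :=
      fun x => Real.ennnorm_eq_ofReal (sq_nonneg _)
    rw [lintegral_congr e]
    exact lt_of_le_of_lt hg2L (lt_top_iff_ne_top.mpr hf2L)
  -- the means agree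
  have hmean : ∫ z, (∫ y, P z y * f y ∂m) ∂π = ∫ z, f z ∂π := by
    have hs := SWAP' (fun x y => f y) (hfmeas.comp measurable_snd) ?_
    · rw [hs]
      apply integral_congr_ae
      filter_upwards with y
      rw [integral_mul_const, hstoch y, one_mul]
    · rw [Lstat' _ hfmeas.ennnorm]
      exact hfint.2.ne
  -- variance expansions
  have hA : ∫ x, (f x - ∫ z, f z ∂π) ^ 2 ∂π = (∫ x, f x ^ 2 ∂π) - (∫ z, f z ∂π) ^ 2 :=
    var_expand hfint hf2int
  have hB : ∫ x, ((∫ y, P x y * f y ∂m) - ∫ z, (∫ y, P z y * f y ∂m) ∂π) ^ 2 ∂π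
      = (∫ x, (∫ y, P x y * f y ∂m) ^ 2 ∂π) - (∫ z, (∫ y, P z y * f y ∂m) ∂π) ^ 2 :=
    var_expand hgint hg2int
  -- two-step density facts
  have hQW : ∀ x y, (∫⁻ z, ENNReal.ofReal (P x z) * ENNReal.ofReal (P z y) ∂m) ≠ ⊤ →
      ENNReal.ofReal (∫ z, P x z * P z y ∂m)
        = ∫⁻ z, ENNReal.ofReal (P x z) * ENNReal.ofReal (P z y) ∂m := by
    intro x y hne
    have hm : Measurable fun z => P x z * P z y :=
      (hPx x).mul (hPmeas.comp (measurable_id.prodMk measurable_const))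
    have heq : ∀ z, ENNReal.ofReal (P x z) * ENNReal.ofReal (P z y)
        = (‖P x z * P z y‖₊ : ℝ≥0∞) := by
      intro z
      rw [nnnorm_mul, ENNReal.coe_mul, Real.ennnorm_eq_ofReal (hPpos x z),
        Real.ennnorm_eq_ofReal (hPpos z y)]
    have hint : Integrable (fun z => P x z * P z y) m := by
      refine ⟨hm.aestronglyMeasurable, ?_⟩
      rw [hfi_nnnorm, ← lintegral_congr heq]
      exact lt_top_iff_ne_top.mpr hne
    rw [ofReal_integral_eq_lintegral_ofReal hint
      (Filter.Eventually.of_forall fun z => mul_nonneg (hPpos x z) (hPpos z y))]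
    apply lintegral_congr; intro z
    rw [ENNReal.ofReal_mul (hPpos x z)]
  have hQle : ∀ x y, ENNReal.ofReal (∫ z, P x z * P z y ∂m)
      ≤ ∫⁻ z, ENNReal.ofReal (P x z) * ENNReal.ofReal (P z y) ∂m := by
    intro x y
    by_cases hne : (∫⁻ z, ENNReal.ofReal (P x z) * ENNReal.ofReal (P z y) ∂m) = ⊤
    · rw [hne]; exact le_top
    · exact le_of_eq (hQW x y hne)
  have hW1 : ∀ x, ∫⁻ y, (∫⁻ z, ENNReal.ofReal (P x z) * ENNReal.ofReal (P z y) ∂m) ∂m = 1 := by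
    intro x
    rw [lintegral_lintegral_swap]
    · have e : ∀ z, ∫⁻ y, ENNReal.ofReal (P x z) * ENNReal.ofReal (P z y) ∂m
          = ENNReal.ofReal (P x z) := by
        intro z
        rw [lintegral_const_mul _ (hPxE z), hrow z, mul_one]
      rw [lintegral_congr e, hrow x]
    · exact (((hPxE x).comp measurable_snd).mul
        ((hPmeas.comp (measurable_snd.prodMk measurable_fst)).ennreal_ofReal)).aemeasurable
  have Lstat2 : ∀ φ : Ω → ℝ≥0∞, Measurable φ →
      ∫⁻ x, (∫⁻ y, (∫⁻ z, ENNReal.ofReal (P x z) * ENNReal.ofReal (P z y) ∂m) * φ y ∂m) ∂π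
        = ∫⁻ y, φ y ∂π := by
    intro φ hφ
    have hψ : Measurable fun z => ∫⁻ y, ENNReal.ofReal (P z y) * φ y ∂m :=
      Measurable.lintegral_prod_right (hPmeas.ennreal_ofReal.mul (hφ.comp measurable_snd))
    have inner_eq : ∀ x,
        ∫⁻ y, (∫⁻ z, ENNReal.ofReal (P x z) * ENNReal.ofReal (P z y) ∂m) * φ y ∂m
        = ∫⁻ z, ENNReal.ofReal (P x z) * (∫⁻ y, ENNReal.ofReal (P z y) * φ y ∂m) ∂m := by
      intro x
      have e1 : ∀ y, (∫⁻ z, ENNReal.ofReal (P x z) * ENNReal.ofReal (P z y) ∂m) * φ y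
          = ∫⁻ z, ENNReal.ofReal (P x z) * ENNReal.ofReal (P z y) * φ y ∂m := by
        intro y
        have hPcol : Measurable fun z => ENNReal.ofReal (P z y) :=
          (hPmeas.comp (measurable_id.prodMk measurable_const)).ennreal_ofReal
        rw [← lintegral_mul_const _ (f := fun z => ENNReal.ofReal (P x z) * ENNReal.ofReal (P z y))
          ((hPxE x).mul hPcol)]
      rw [lintegral_congr e1, lintegral_lintegral_swap]
      · apply lintegral_congr; intro z
        simp only [mul_assoc]
        rw [lintegral_const_mul _ (f := fun y => ENNReal.ofReal (P z y) * φ y) ((hPxE z).mul hφ)]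
      · apply Measurable.aemeasurable
        exact ((((hPxE x).comp measurable_snd).mul
          ((hPmeas.comp (measurable_snd.prodMk measurable_fst)).ennreal_ofReal)).mul
            (hφ.comp measurable_fst))
    rw [lintegral_congr inner_eq, Lstat' _ hψ, Lstat' _ hφ]
  -- iterated two-step stationarity facts
  have mWx : ∀ x, Measurable fun y =>
      ∫⁻ z, ENNReal.ofReal (P x z) * ENNReal.ofReal (P z y) ∂m :=
    fun x => mW.comp measurable_prodMk_left
  have mf2E : Measurable fun x => ENNReal.ofReal (f x ^ 2) :=
    (hfmeas.pow_const 2).ennreal_ofReal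
  have L1it : ∫⁻ x, (∫⁻ y, ENNReal.ofReal (f x ^ 2)
        * (∫⁻ z, ENNReal.ofReal (P x z) * ENNReal.ofReal (P z y) ∂m) ∂m) ∂π
      = ∫⁻ x, ENNReal.ofReal (f x ^ 2) ∂π := by
    apply lintegral_congr; intro x
    rw [lintegral_const_mul _ (mWx x), hW1 x, mul_one]
  have L2it : ∫⁻ x, (∫⁻ y, ENNReal.ofReal (f y ^ 2)
        * (∫⁻ z, ENNReal.ofReal (P x z) * ENNReal.ofReal (P z y) ∂m) ∂m) ∂π
      = ∫⁻ x, ENNReal.ofReal (f x ^ 2) ∂π := by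
    have e : ∀ x, (∫⁻ y, ENNReal.ofReal (f y ^ 2)
          * (∫⁻ z, ENNReal.ofReal (P x z) * ENNReal.ofReal (P z y) ∂m) ∂m)
        = ∫⁻ y, (∫⁻ z, ENNReal.ofReal (P x z) * ENNReal.ofReal (P z y) ∂m)
          * ENNReal.ofReal (f y ^ 2) ∂m := by
      intro x; apply lintegral_congr; intro y; ring
    rw [lintegral_congr e]
    exact Lstat2 _ mf2E
  -- product measure versions
  have mWf1 : Measurable fun p : Ω × Ω => ENNReal.ofReal (f p.1 ^ 2)
      * (∫⁻ z, ENNReal.ofReal (P p.1 z) * ENNReal.ofReal (P z p.2) ∂m) :=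
    (mf2E.comp measurable_fst).mul mW
  have mWf2 : Measurable fun p : Ω × Ω => ENNReal.ofReal (f p.2 ^ 2)
      * (∫⁻ z, ENNReal.ofReal (P p.1 z) * ENNReal.ofReal (P z p.2) ∂m) :=
    (mf2E.comp measurable_snd).mul mW
  have L1L : ∫⁻ p : Ω × Ω, ENNReal.ofReal (f p.1 ^ 2)
        * (∫⁻ z, ENNReal.ofReal (P p.1 z) * ENNReal.ofReal (P z p.2) ∂m) ∂(π.prod m)
      = ∫⁻ x, ENNReal.ofReal (f x ^ 2) ∂π := by
    rw [lintegral_prod _ mWf1.aemeasurable]; exact L1it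
  have L2L : ∫⁻ p : Ω × Ω, ENNReal.ofReal (f p.2 ^ 2)
        * (∫⁻ z, ENNReal.ofReal (P p.1 z) * ENNReal.ofReal (P z p.2) ∂m) ∂(π.prod m)
      = ∫⁻ x, ENNReal.ofReal (f x ^ 2) ∂π := by
    rw [lintegral_prod _ mWf2.aemeasurable]; exact L2it
  have hWL : ∫⁻ p : Ω × Ω,
        (∫⁻ z, ENNReal.ofReal (P p.1 z) * ENNReal.ofReal (P z p.2) ∂m) ∂(π.prod m) = 1 := by
    rw [lintegral_prod _ mW.aemeasurable]
    have : ∀ x, (∫⁻ y, (∫⁻ z, ENNReal.ofReal (P x z) * ENNReal.ofReal (P z y) ∂m) ∂m)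
        = (1 : ℝ≥0∞) := hW1
    rw [lintegral_congr this, lintegral_one, measure_univ]
  have haeQW : ∀ᵐ p ∂(π.prod m), ENNReal.ofReal (∫ z, P p.1 z * P z p.2 ∂m)
      = ∫⁻ z, ENNReal.ofReal (P p.1 z) * ENNReal.ofReal (P z p.2) ∂m := by
    have h := ae_lt_top mW (by rw [hWL]; exact ENNReal.one_ne_top)
    filter_upwards [h] with p hp using hQW p.1 p.2 hp.ne
  have hQpos : ∀ x y, 0 ≤ ∫ z, P x z * P z y ∂m :=
    fun x y => integral_nonneg fun z => mul_nonneg (hPpos x z) (hPpos z y)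
  -- integrability on the product
  have hc1int : Integrable
      (fun p : Ω × Ω => f p.1 ^ 2 * (∫ z, P p.1 z * P z p.2 ∂m)) (π.prod m) := by
    refine ⟨(((hfmeas.comp measurable_fst).pow_const 2).mul mQ).aestronglyMeasurable, ?_⟩
    rw [hfi_nnnorm]
    have e : ∀ p : Ω × Ω, (‖f p.1 ^ 2 * (∫ z, P p.1 z * P z p.2 ∂m)‖₊ : ℝ≥0∞)
        ≤ ENNReal.ofReal (f p.1 ^ 2)
          * (∫⁻ z, ENNReal.ofReal (P p.1 z) * ENNReal.ofReal (P z p.2) ∂m) := by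
      intro p
      rw [nnnorm_mul, ENNReal.coe_mul, Real.ennnorm_eq_ofReal (sq_nonneg _),
        Real.ennnorm_eq_ofReal (hQpos p.1 p.2)]
      exact mul_le_mul_right (hQle p.1 p.2) _
    exact lt_of_le_of_lt (lintegral_mono e) (by rw [L1L]; exact lt_top_iff_ne_top.mpr hf2L)
  have hc2int : Integrable
      (fun p : Ω × Ω => f p.2 ^ 2 * (∫ z, P p.1 z * P z p.2 ∂m)) (π.prod m) := by
    refine ⟨(((hfmeas.comp measurable_snd).pow_const 2).mul mQ).aestronglyMeasurable, ?_⟩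
    rw [hfi_nnnorm]
    have e : ∀ p : Ω × Ω, (‖f p.2 ^ 2 * (∫ z, P p.1 z * P z p.2 ∂m)‖₊ : ℝ≥0∞)
        ≤ ENNReal.ofReal (f p.2 ^ 2)
          * (∫⁻ z, ENNReal.ofReal (P p.1 z) * ENNReal.ofReal (P z p.2) ∂m) := by
      intro p
      rw [nnnorm_mul, ENNReal.coe_mul, Real.ennnorm_eq_ofReal (sq_nonneg _),
        Real.ennnorm_eq_ofReal (hQpos p.1 p.2)]
      exact mul_le_mul_right (hQle p.1 p.2) _
    exact lt_of_le_of_lt (lintegral_mono e) (by rw [L2L]; exact lt_top_iff_ne_top.mpr hf2L)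
  have hc3int : Integrable
      (fun p : Ω × Ω => f p.1 * f p.2 * (∫ z, P p.1 z * P z p.2 ∂m)) (π.prod m) := by
    refine ⟨(((hfmeas.comp measurable_fst).mul (hfmeas.comp measurable_snd)).mul
      mQ).aestronglyMeasurable, ?_⟩
    rw [hfi_nnnorm]
    have e : ∀ p : Ω × Ω, (‖f p.1 * f p.2 * (∫ z, P p.1 z * P z p.2 ∂m)‖₊ : ℝ≥0∞)
        ≤ ENNReal.ofReal (f p.1 ^ 2)
            * (∫⁻ z, ENNReal.ofReal (P p.1 z) * ENNReal.ofReal (P z p.2) ∂m)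
          + ENNReal.ofReal (f p.2 ^ 2)
            * (∫⁻ z, ENNReal.ofReal (P p.1 z) * ENNReal.ofReal (P z p.2) ∂m) := by
      intro p
      rw [nnnorm_mul, nnnorm_mul, ENNReal.coe_mul, ENNReal.coe_mul,
        Real.ennnorm_eq_ofReal (hQpos p.1 p.2)]
      calc (‖f p.1‖₊ : ℝ≥0∞) * ‖f p.2‖₊ * ENNReal.ofReal (∫ z, P p.1 z * P z p.2 ∂m)
          ≤ ((‖f p.1‖₊ : ℝ≥0∞) * ‖f p.1‖₊ + (‖f p.2‖₊ : ℝ≥0∞) * ‖f p.2‖₊)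
            * (∫⁻ z, ENNReal.ofReal (P p.1 z) * ENNReal.ofReal (P z p.2) ∂m) :=
            mul_le_mul' ab_le (hQle p.1 p.2)
        _ = ENNReal.ofReal (f p.1 ^ 2)
              * (∫⁻ z, ENNReal.ofReal (P p.1 z) * ENNReal.ofReal (P z p.2) ∂m)
            + ENNReal.ofReal (f p.2 ^ 2)
              * (∫⁻ z, ENNReal.ofReal (P p.1 z) * ENNReal.ofReal (P z p.2) ∂m) := by
            rw [esq (f p.1), esq (f p.2)]
            ring
    refine lt_of_le_of_lt (lintegral_mono e) ?_
    rw [lintegral_add_left mWf1, L1L, L2L]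
    exact ENNReal.add_lt_top.mpr ⟨lt_top_iff_ne_top.mpr hf2L, lt_top_iff_ne_top.mpr hf2L⟩
  have hcint : Integrable
      (fun p : Ω × Ω => (f p.1 - f p.2) ^ 2 * (∫ z, P p.1 z * P z p.2 ∂m)) (π.prod m) := by
    refine ⟨((((hfmeas.comp measurable_fst).sub (hfmeas.comp measurable_snd)).pow_const 2).mul
      mQ).aestronglyMeasurable, ?_⟩
    rw [hfi_nnnorm]
    have e : ∀ p : Ω × Ω, (‖(f p.1 - f p.2) ^ 2 * (∫ z, P p.1 z * P z p.2 ∂m)‖₊ : ℝ≥0∞)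
        ≤ (2 * ENNReal.ofReal (f p.1 ^ 2) + 2 * ENNReal.ofReal (f p.2 ^ 2))
          * (∫⁻ z, ENNReal.ofReal (P p.1 z) * ENNReal.ofReal (P z p.2) ∂m) := by
      intro p
      rw [nnnorm_mul, ENNReal.coe_mul, Real.ennnorm_eq_ofReal (sq_nonneg _),
        Real.ennnorm_eq_ofReal (hQpos p.1 p.2)]
      refine mul_le_mul' ?_ (hQle p.1 p.2)
      calc ENNReal.ofReal ((f p.1 - f p.2) ^ 2)
          ≤ ENNReal.ofReal (2 * f p.1 ^ 2 + 2 * f p.2 ^ 2) :=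
            ENNReal.ofReal_le_ofReal (by nlinarith [sq_nonneg (f p.1 + f p.2)])
        _ = 2 * ENNReal.ofReal (f p.1 ^ 2) + 2 * ENNReal.ofReal (f p.2 ^ 2) := by
            rw [ENNReal.ofReal_add (by positivity) (by positivity),
              ENNReal.ofReal_mul (by norm_num), ENNReal.ofReal_mul (by norm_num)]
            norm_num
    refine lt_of_le_of_lt (lintegral_mono e) ?_
    have e2 : ∀ p : Ω × Ω, (2 * ENNReal.ofReal (f p.1 ^ 2) + 2 * ENNReal.ofReal (f p.2 ^ 2))
          * (∫⁻ z, ENNReal.ofReal (P p.1 z) * ENNReal.ofReal (P z p.2) ∂m)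
        = 2 * (ENNReal.ofReal (f p.1 ^ 2)
            * (∫⁻ z, ENNReal.ofReal (P p.1 z) * ENNReal.ofReal (P z p.2) ∂m))
          + 2 * (ENNReal.ofReal (f p.2 ^ 2)
            * (∫⁻ z, ENNReal.ofReal (P p.1 z) * ENNReal.ofReal (P z p.2) ∂m)) := by
      intro p; ring
    rw [lintegral_congr e2, lintegral_add_left (mWf1.const_mul 2),
      lintegral_const_mul _ mWf1, lintegral_const_mul _ mWf2, L1L, L2L]
    have : ∫⁻ x, ENNReal.ofReal (f x ^ 2) ∂π < ⊤ := lt_top_iff_ne_top.mpr hf2L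
    exact ENNReal.add_lt_top.mpr ⟨ENNReal.mul_lt_top ENNReal.ofNat_ne_top.lt_top this,
      ENNReal.mul_lt_top ENNReal.ofNat_ne_top.lt_top this⟩
  -- values of the three product integrals
  have hf2eqL : ∫ x, f x ^ 2 ∂π = (∫⁻ x, ENNReal.ofReal (f x ^ 2) ∂π).toReal := by
    exact integral_eq_lintegral_of_nonneg_ae
      (Filter.Eventually.of_forall fun x => sq_nonneg _)
      (hfmeas.pow_const 2).aestronglyMeasurable
  have hc1eq : ∫ p : Ω × Ω, f p.1 ^ 2 * (∫ z, P p.1 z * P z p.2 ∂m) ∂(π.prod m)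
      = ∫ x, f x ^ 2 ∂π := by
    rw [show (∫ p : Ω × Ω, f p.1 ^ 2 * (∫ z, P p.1 z * P z p.2 ∂m) ∂(π.prod m))
        = (∫⁻ p : Ω × Ω, ENNReal.ofReal (f p.1 ^ 2 * (∫ z, P p.1 z * P z p.2 ∂m))
            ∂(π.prod m)).toReal from
      integral_eq_lintegral_of_nonneg_ae
        (Filter.Eventually.of_forall fun p => mul_nonneg (sq_nonneg _) (hQpos p.1 p.2))
        hc1int.1, hf2eqL]
    congr 1
    calc ∫⁻ p : Ω × Ω, ENNReal.ofReal (f p.1 ^ 2 * (∫ z, P p.1 z * P z p.2 ∂m)) ∂(π.prod m)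
        = ∫⁻ p : Ω × Ω, ENNReal.ofReal (f p.1 ^ 2)
            * ENNReal.ofReal (∫ z, P p.1 z * P z p.2 ∂m) ∂(π.prod m) :=
          lintegral_congr fun p => ENNReal.ofReal_mul (sq_nonneg _)
      _ = ∫⁻ p : Ω × Ω, ENNReal.ofReal (f p.1 ^ 2)
            * (∫⁻ z, ENNReal.ofReal (P p.1 z) * ENNReal.ofReal (P z p.2) ∂m) ∂(π.prod m) := by
          apply lintegral_congr_ae
          filter_upwards [haeQW] with p hp
          rw [hp]
      _ = ∫⁻ x, ENNReal.ofReal (f x ^ 2) ∂π := L1L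
  have hc2eq : ∫ p : Ω × Ω, f p.2 ^ 2 * (∫ z, P p.1 z * P z p.2 ∂m) ∂(π.prod m)
      = ∫ x, f x ^ 2 ∂π := by
    rw [show (∫ p : Ω × Ω, f p.2 ^ 2 * (∫ z, P p.1 z * P z p.2 ∂m) ∂(π.prod m))
        = (∫⁻ p : Ω × Ω, ENNReal.ofReal (f p.2 ^ 2 * (∫ z, P p.1 z * P z p.2 ∂m))
            ∂(π.prod m)).toReal from
      integral_eq_lintegral_of_nonneg_ae
        (Filter.Eventually.of_forall fun p => mul_nonneg (sq_nonneg _) (hQpos p.1 p.2))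
        hc2int.1, hf2eqL]
    congr 1
    calc ∫⁻ p : Ω × Ω, ENNReal.ofReal (f p.2 ^ 2 * (∫ z, P p.1 z * P z p.2 ∂m)) ∂(π.prod m)
        = ∫⁻ p : Ω × Ω, ENNReal.ofReal (f p.2 ^ 2)
            * ENNReal.ofReal (∫ z, P p.1 z * P z p.2 ∂m) ∂(π.prod m) :=
          lintegral_congr fun p => ENNReal.ofReal_mul (sq_nonneg _)
      _ = ∫⁻ p : Ω × Ω, ENNReal.ofReal (f p.2 ^ 2)
            * (∫⁻ z, ENNReal.ofReal (P p.1 z) * ENNReal.ofReal (P z p.2) ∂m) ∂(π.prod m) := by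
          apply lintegral_congr_ae
          filter_upwards [haeQW] with p hp
          rw [hp]
      _ = ∫⁻ x, ENNReal.ofReal (f x ^ 2) ∂π := L2L
  -- the cross term
  have hab : ∀ a b : ℝ, (‖a‖₊ : ℝ≥0∞) * (‖b‖₊ : ℝ≥0∞)
      ≤ ENNReal.ofReal (a ^ 2) + ENNReal.ofReal (b ^ 2) := by
    intro a b
    refine le_trans ab_le (le_of_eq ?_)
    rw [esq a, esq b, pow_two, pow_two]
  have mgE2 : Measurable fun z => ENNReal.ofReal ((∫ y, P z y * f y ∂m) ^ 2) :=
    (mg.pow_const 2).ennreal_ofReal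
  have mM : Measurable fun x => ∫⁻ y, (‖f x‖₊ : ℝ≥0∞) * (‖f y‖₊ : ℝ≥0∞)
      * (∫⁻ z, ENNReal.ofReal (P x z) * ENNReal.ofReal (P z y) ∂m) ∂m :=
    Measurable.lintegral_prod_right
      (((hfmeas.comp measurable_fst).ennnorm.mul (hfmeas.comp measurable_snd).ennnorm).mul mW)
  have mIA : Measurable fun x => ∫⁻ y, ENNReal.ofReal (f x ^ 2)
      * (∫⁻ z, ENNReal.ofReal (P x z) * ENNReal.ofReal (P z y) ∂m) ∂m :=
    Measurable.lintegral_prod_right mWf1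
  have hMfin : ∫⁻ x, (∫⁻ y, (‖f x‖₊ : ℝ≥0∞) * (‖f y‖₊ : ℝ≥0∞)
      * (∫⁻ z, ENNReal.ofReal (P x z) * ENNReal.ofReal (P z y) ∂m) ∂m) ∂π ≠ ⊤ := by
    have step : ∫⁻ x, (∫⁻ y, (‖f x‖₊ : ℝ≥0∞) * (‖f y‖₊ : ℝ≥0∞)
        * (∫⁻ z, ENNReal.ofReal (P x z) * ENNReal.ofReal (P z y) ∂m) ∂m) ∂π
        ≤ ∫⁻ x, (∫⁻ y, ENNReal.ofReal (f x ^ 2)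
            * (∫⁻ z, ENNReal.ofReal (P x z) * ENNReal.ofReal (P z y) ∂m) ∂m) ∂π
          + ∫⁻ x, (∫⁻ y, ENNReal.ofReal (f y ^ 2)
            * (∫⁻ z, ENNReal.ofReal (P x z) * ENNReal.ofReal (P z y) ∂m) ∂m) ∂π := by
      rw [← lintegral_add_left mIA]
      refine lintegral_mono fun x => ?_
      have mx : Measurable fun y => ENNReal.ofReal (f x ^ 2)
          * (∫⁻ z, ENNReal.ofReal (P x z) * ENNReal.ofReal (P z y) ∂m) :=
        measurable_const.mul (mWx x)
      rw [← lintegral_add_left mx]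
      refine lintegral_mono fun y => ?_
      rw [← add_mul]
      exact mul_le_mul_left (hab (f x) (f y)) _
    refine ne_top_of_le_ne_top ?_ step
    rw [L1it, L2it]
    exact ENNReal.add_ne_top.mpr ⟨hf2L, hf2L⟩
  have hMae := ae_lt_top mM hMfin
  have key_ae : ∀ᵐ x ∂π, ∫ y, f x * f y * (∫ z, P x z * P z y ∂m) ∂m
      = ∫ z, P x z * (f x * (∫ w, P z w * f w ∂m)) ∂m := by
    filter_upwards [hMae] with x hx
    have hmK : Measurable fun p : Ω × Ω => (f x * f p.1) * (P x p.2 * P p.2 p.1) :=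
      (measurable_const.mul (hfmeas.comp measurable_fst)).mul
        (((hPx x).comp measurable_snd).mul (hPmeas.comp (measurable_snd.prodMk measurable_fst)))
    have hKint : Integrable (Function.uncurry fun y z => (f x * f y) * (P x z * P z y))
        (m.prod m) := by
      refine ⟨(hmK.aestronglyMeasurable :
        AEStronglyMeasurable (Function.uncurry fun y z => (f x * f y) * (P x z * P z y))
          (m.prod m)), ?_⟩
      rw [hfi_nnnorm]
      simp only [Function.uncurry_def]
      rw [lintegral_prod _ hmK.ennnorm.aemeasurable]
      have e : ∀ y, (∫⁻ z, (‖(f x * f y) * (P x z * P z y)‖₊ : ℝ≥0∞) ∂m)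
          = (‖f x‖₊ : ℝ≥0∞) * (‖f y‖₊ : ℝ≥0∞)
            * (∫⁻ z, ENNReal.ofReal (P x z) * ENNReal.ofReal (P z y) ∂m) := by
        intro y
        have hPcol : Measurable fun z => ENNReal.ofReal (P z y) :=
          (hPmeas.comp (measurable_id.prodMk measurable_const)).ennreal_ofReal
        rw [← lintegral_const_mul _ (f := fun z => ENNReal.ofReal (P x z) * ENNReal.ofReal (P z y))
          ((hPxE x).mul hPcol)]
        apply lintegral_congr; intro z
        rw [nnnorm_mul, ENNReal.coe_mul, nnnorm_mul, ENNReal.coe_mul,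
          Real.ennnorm_eq_ofReal (mul_nonneg (hPpos x z) (hPpos z y)),
          ENNReal.ofReal_mul (hPpos x z)]
      rw [lintegral_congr e]
      exact hx
    calc ∫ y, f x * f y * (∫ z, P x z * P z y ∂m) ∂m
        = ∫ y, ∫ z, (f x * f y) * (P x z * P z y) ∂m ∂m := by
          apply integral_congr_ae
          filter_upwards with y
          exact (integral_const_mul _ _).symm
      _ = ∫ z, ∫ y, (f x * f y) * (P x z * P z y) ∂m ∂m := integral_integral_swap hKint
      _ = ∫ z, P x z * (f x * (∫ w, P z w * f w ∂m)) ∂m := by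
          apply integral_congr_ae
          filter_upwards with z
          have e2 : ∀ y, (f x * f y) * (P x z * P z y) = (P x z * f x) * (P z y * f y) :=
            fun y => by ring
          simp only [e2]
          rw [integral_const_mul]
          ring
  have hc3eq : ∫ p : Ω × Ω, f p.1 * f p.2 * (∫ z, P p.1 z * P z p.2 ∂m) ∂(π.prod m)
      = ∫ x, (∫ y, P x y * f y ∂m) ^ 2 ∂π := by
    rw [show (∫ p : Ω × Ω, f p.1 * f p.2 * (∫ z, P p.1 z * P z p.2 ∂m) ∂(π.prod m))
        = ∫ x, ∫ y, f x * f y * (∫ z, P x z * P z y ∂m) ∂m ∂π from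
      (integral_integral (show Integrable
        (Function.uncurry fun x y => f x * f y * (∫ z, P x z * P z y ∂m)) (π.prod m)
        from hc3int)).symm]
    rw [integral_congr_ae key_ae]
    have hGm : Measurable fun p : Ω × Ω => f p.1 * (∫ w, P p.2 w * f w ∂m) :=
      (hfmeas.comp measurable_fst).mul (mg.comp measurable_snd)
    have cond3 : ∫⁻ x, (∫⁻ z, ENNReal.ofReal (P x z)
        * (‖f x * (∫ w, P z w * f w ∂m)‖₊ : ℝ≥0∞) ∂m) ∂π ≠ ⊤ := by
      have step : ∫⁻ x, (∫⁻ z, ENNReal.ofReal (P x z)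
          * (‖f x * (∫ w, P z w * f w ∂m)‖₊ : ℝ≥0∞) ∂m) ∂π
          ≤ ∫⁻ x, (∫⁻ z, ENNReal.ofReal (P x z) * ENNReal.ofReal (f x ^ 2) ∂m) ∂π
            + ∫⁻ x, (∫⁻ z, ENNReal.ofReal (P x z)
              * ENNReal.ofReal ((∫ w, P z w * f w ∂m) ^ 2) ∂m) ∂π := by
        have mB1 : Measurable fun x => ∫⁻ z, ENNReal.ofReal (P x z)
            * ENNReal.ofReal (f x ^ 2) ∂m :=
          Measurable.lintegral_prod_right
            (f := fun x z => ENNReal.ofReal (P x z) * ENNReal.ofReal (f x ^ 2))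
            (hPmeas.ennreal_ofReal.mul (mf2E.comp measurable_fst))
        rw [← lintegral_add_left mB1]
        refine lintegral_mono fun x => ?_
        rw [← lintegral_add_left (f := fun z => ENNReal.ofReal (P x z) * ENNReal.ofReal (f x ^ 2))
          ((hPxE x).mul measurable_const)]
        refine lintegral_mono fun z => ?_
        rw [← mul_add]
        refine mul_le_mul_right ?_ _
        rw [nnnorm_mul, ENNReal.coe_mul]
        exact hab _ _
      refine ne_top_of_le_ne_top ?_ step
      have e1 : ∫⁻ x, (∫⁻ z, ENNReal.ofReal (P x z) * ENNReal.ofReal (f x ^ 2) ∂m) ∂π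
          = ∫⁻ x, ENNReal.ofReal (f x ^ 2) ∂π := by
        apply lintegral_congr; intro x
        rw [lintegral_mul_const _ (hPxE x), hrow x, one_mul]
      rw [e1, Lstat' _ mgE2]
      exact ENNReal.add_ne_top.mpr ⟨hf2L, ne_top_of_le_ne_top hf2L hg2L⟩
    rw [SWAP' (fun x z => f x * (∫ w, P z w * f w ∂m)) hGm cond3]
    apply integral_congr_ae
    filter_upwards with y
    have e2 : ∀ x, P y x * (f x * (∫ w, P y w * f w ∂m))
        = (P y x * f x) * (∫ w, P y w * f w ∂m) := fun x => by ring
    simp only [e2]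
    rw [integral_mul_const, sq]
  have hC : ∫ x, (∫ y, (f x - f y) ^ 2 * (∫ z, P x z * P z y ∂m) ∂m) ∂π
      = 2 * (∫ x, f x ^ 2 ∂π) - 2 * ∫ x, (∫ y, P x y * f y ∂m) ^ 2 ∂π := by
    rw [show (∫ x, (∫ y, (f x - f y) ^ 2 * (∫ z, P x z * P z y ∂m) ∂m) ∂π)
        = ∫ p : Ω × Ω, (f p.1 - f p.2) ^ 2 * (∫ z, P p.1 z * P z p.2 ∂m) ∂(π.prod m) from
      integral_integral (show Integrable
        (Function.uncurry fun x y => (f x - f y) ^ 2 * (∫ z, P x z * P z y ∂m)) (π.prod m)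
        from hcint)]
    have split : ∀ p : Ω × Ω, (f p.1 - f p.2) ^ 2 * (∫ z, P p.1 z * P z p.2 ∂m)
        = (f p.1 ^ 2 * (∫ z, P p.1 z * P z p.2 ∂m)
            + f p.2 ^ 2 * (∫ z, P p.1 z * P z p.2 ∂m))
          - 2 * (f p.1 * f p.2 * (∫ z, P p.1 z * P z p.2 ∂m)) := fun p => by ring
    simp only [split]
    rw [integral_sub (show Integrable (fun p : Ω × Ω =>
        f p.1 ^ 2 * (∫ z, P p.1 z * P z p.2 ∂m) + f p.2 ^ 2 * (∫ z, P p.1 z * P z p.2 ∂m))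
        (π.prod m) from hc1int.add hc2int) (hc3int.const_mul 2),
      integral_add hc1int hc2int, integral_const_mul, hc1eq, hc2eq, hc3eq]
    ring
  rw [hA, hB, hmean, hC]
  ring
end

section
/- Let M = (Ω, P, π) be a reversible, strongly π-irreducible lazy Markov chain with Poincaré constant λ > 0. For any starting distribution μ absolutely continuous with respect to π with density f_μ/f_π ∈ L²(π), the distribution after t steps satisfies ‖P^t(μ,·) − π‖_TV ≤ (1/2)(1−λ)^t √(Var_π(f_μ/f_π)). -/
open MeasureTheory



namespace MixAux
variable {Ω : Type*} [MeasurableSpace Ω]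

/-- transition operator on functions -/
noncomputable def Pop (m : Measure Ω) (P : Ω → Ω → ℝ) (g : Ω → ℝ) : Ω → ℝ :=
  fun x => ∫ y, P x y * g y ∂m

/-- bundled chain hypotheses -/
structure Hyp (m : Measure Ω) (fπ : Ω → ℝ) (P : Ω → Ω → ℝ) (π : Measure Ω) : Prop where
  fπpos : ∀ x, 0 ≤ fπ x
  fπmeas : Measurable fπ
  πdef : π = m.withDensity (fun x => ENNReal.ofReal (fπ x))
  πprob : IsProbabilityMeasure π
  Ppos : ∀ x y, 0 ≤ P x y
  Pmeas : Measurable fun p : Ω × Ω => P p.1 p.2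
  stoch : ∀ x, ∫ y, P x y ∂m = 1
  rev : ∀ x y, fπ x * P x y = fπ y * P y x

variable {m : Measure Ω} {fπ : Ω → ℝ} {P : Ω → Ω → ℝ} {π : Measure Ω} {g : Ω → ℝ}
variable [SigmaFinite m]

namespace Hyp
variable (H : Hyp m fπ P π)
include H

lemma Pml (x : Ω) : Measurable fun y => P x y := H.Pmeas.comp measurable_prodMk_left
lemma Pmr (y : Ω) : Measurable fun x => P x y := H.Pmeas.comp measurable_prodMk_right

lemma PintB (x : Ω) : Integrable (fun y => P x y) m := by
  by_contra h
  have := integral_undef h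
  rw [H.stoch x] at this; norm_num at this

lemma lintP (x : Ω) : ∫⁻ y, ENNReal.ofReal (P x y) ∂m = 1 := by
  rw [← ofReal_integral_eq_lintegral_ofReal (H.PintB x)
    (Filter.Eventually.of_forall fun y => H.Ppos x y), H.stoch x, ENNReal.ofReal_one]

lemma lintfπP (y : Ω) :
    ∫⁻ x, ENNReal.ofReal (fπ x) * ENNReal.ofReal (P x y) ∂m = ENNReal.ofReal (fπ y) := by
  have h1 : ∀ x, ENNReal.ofReal (fπ x) * ENNReal.ofReal (P x y)
      = ENNReal.ofReal (fπ y) * ENNReal.ofReal (P y x) := by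
    intro x
    rw [← ENNReal.ofReal_mul (H.fπpos x), H.rev x y, ENNReal.ofReal_mul (H.fπpos y)]
  simp_rw [h1]
  rw [lintegral_const_mul _ ((H.Pml y).ennreal_ofReal), H.lintP y, mul_one]

/-- the basic swap identity (Tonelli form) -/
lemma swapL {f : Ω → ENNReal} (hf : Measurable f) :
    ∫⁻ x, (∫⁻ y, ENNReal.ofReal (P x y) * f y ∂m) ∂π = ∫⁻ y, f y ∂π := by
  have hmi : Measurable fun x => ∫⁻ y, ENNReal.ofReal (P x y) * f y ∂m :=
    Measurable.lintegral_prod_right (H.Pmeas.ennreal_ofReal.mul (hf.comp measurable_snd))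
  rw [H.πdef, lintegral_withDensity_eq_lintegral_mul _ H.fπmeas.ennreal_ofReal hmi,
      lintegral_withDensity_eq_lintegral_mul _ H.fπmeas.ennreal_ofReal hf]
  simp only [Pi.mul_apply]
  calc ∫⁻ x, ENNReal.ofReal (fπ x) * ∫⁻ y, ENNReal.ofReal (P x y) * f y ∂m ∂m
      = ∫⁻ x, ∫⁻ y, ENNReal.ofReal (fπ x) * ENNReal.ofReal (P x y) * f y ∂m ∂m := by
        refine lintegral_congr fun x => ?_
        rw [← lintegral_const_mul (f := fun y => ENNReal.ofReal (P x y) * f y) _ ((H.Pml x).ennreal_ofReal.mul hf)]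
        simp_rw [mul_assoc]
    _ = ∫⁻ y, ∫⁻ x, ENNReal.ofReal (fπ x) * ENNReal.ofReal (P x y) * f y ∂m ∂m := by
        refine lintegral_lintegral_swap ?_
        exact ((H.fπmeas.ennreal_ofReal.comp measurable_fst).mul
          H.Pmeas.ennreal_ofReal |>.mul (hf.comp measurable_snd)).aemeasurable
    _ = ∫⁻ y, ENNReal.ofReal (fπ y) * f y ∂m := by
        refine lintegral_congr fun y => ?_
        rw [lintegral_mul_const (f := fun x => ENNReal.ofReal (fπ x) * ENNReal.ofReal (P x y)) _ (H.fπmeas.ennreal_ofReal.mul ((H.Pmr y).ennreal_ofReal)),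
          H.lintfπP y]

/-- pointwise Hölder bound for the kernel average -/
lemma hold (x : Ω) {G : Ω → ENNReal} (hG : Measurable G) :
    ∫⁻ y, ENNReal.ofReal (P x y) * G y ∂m
      ≤ (∫⁻ y, ENNReal.ofReal (P x y) * G y ^ 2 ∂m) ^ (1/2 : ℝ) := by
  have h2 : (2:ℝ).HolderConjugate 2 := .two_two
  have hp : Measurable fun y => ENNReal.ofReal (P x y) := (H.Pml x).ennreal_ofReal
  have key := ENNReal.lintegral_mul_le_Lp_mul_Lq m h2
    ((hp.pow_const (1/2:ℝ)).mul hG).aemeasurable (hp.pow_const (1/2:ℝ)).aemeasurable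
  have hh : ∀ a : ENNReal, a ^ (1/2:ℝ) * a ^ (1/2:ℝ) = a := by
    intro a
    rw [← ENNReal.rpow_add_of_nonneg (1/2) (1/2) (by norm_num) (by norm_num)]
    norm_num
  have e1 : ∀ y, (ENNReal.ofReal (P x y) ^ (1/2:ℝ) * G y) * ENNReal.ofReal (P x y) ^ (1/2:ℝ)
      = ENNReal.ofReal (P x y) * G y := by
    intro y
    rw [mul_comm, ← mul_assoc, hh]
  have e2 : ∀ y, ((ENNReal.ofReal (P x y) ^ (1/2:ℝ) * G y)) ^ (2:ℝ)
      = ENNReal.ofReal (P x y) * G y ^ 2 := by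
    intro y
    rw [ENNReal.mul_rpow_of_nonneg _ _ (by norm_num), ← ENNReal.rpow_mul,
      ← ENNReal.rpow_natCast (G y) 2]
    norm_num
  have e3 : ∀ y, (ENNReal.ofReal (P x y) ^ (1/2:ℝ)) ^ (2:ℝ) = ENNReal.ofReal (P x y) := by
    intro y
    rw [← ENNReal.rpow_mul]; norm_num
  simp only [Pi.mul_apply] at key
  simp_rw [e1, e2, e3] at key
  rwa [H.lintP x, ENNReal.one_rpow, mul_one] at key

lemma Pop_meas (hg : Measurable g) : Measurable (Pop m P g) := by
  have : StronglyMeasurable fun p : Ω × Ω => P p.1 p.2 * g p.2 :=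
    (H.Pmeas.mul (hg.comp measurable_snd)).stronglyMeasurable
  exact this.integral_prod_right'.measurable

lemma l2fin (hg2 : MemLp g 2 π) : ∫⁻ x, (‖g x‖₊ : ENNReal) ^ 2 ∂π < ⊤ := by
  have h := ((memLp_two_iff_integrable_sq hg2.aestronglyMeasurable).1 hg2).2
  rw [hasFiniteIntegral_def] at h
  simpa only [enorm_eq_nnnorm, nnnorm_pow, ENNReal.coe_pow] using h

omit H in
lemma ofReal_sq (a : ℝ) : ENNReal.ofReal (a ^ 2) = (‖a‖₊ : ENNReal) ^ 2 := by
  rw [← sq_abs, ENNReal.ofReal_pow (abs_nonneg a)]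
  congr 1
  rw [← Real.enorm_eq_ofReal_abs, enorm_eq_nnnorm]

lemma nnP (x y : Ω) : (‖P x y‖₊ : ENNReal) = ENNReal.ofReal (P x y) := by
  rw [← Real.enorm_eq_ofReal (H.Ppos x y), enorm_eq_nnnorm]

/-- pointwise bound for the squared kernel average -/
lemma pt_sq (hg : Measurable g) (x : Ω) :
    (‖Pop m P g x‖₊ : ENNReal) ^ 2 ≤ ∫⁻ y, ENNReal.ofReal (P x y) * (‖g y‖₊ : ENNReal) ^ 2 ∂m := by
  have h1 : (‖Pop m P g x‖₊ : ENNReal) ≤ ∫⁻ y, ENNReal.ofReal (P x y) * (‖g y‖₊ : ENNReal) ∂m := by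
    refine le_trans (enorm_integral_le_lintegral_enorm _) (le_of_eq ?_)
    refine lintegral_congr fun y => ?_
    rw [enorm_eq_nnnorm, nnnorm_mul, ENNReal.coe_mul, H.nnP x y]
  refine le_trans (pow_le_pow_left' (le_trans h1 (H.hold x
    (hg.nnnorm.coe_nnreal_ennreal))) 2) (le_of_eq ?_)
  rw [← ENNReal.rpow_natCast _ 2, ← ENNReal.rpow_mul]
  norm_num

lemma PopL2 (hg : Measurable g) :
    ∫⁻ x, (‖Pop m P g x‖₊ : ENNReal) ^ 2 ∂π ≤ ∫⁻ x, (‖g x‖₊ : ENNReal) ^ 2 ∂π := by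
  refine le_trans (lintegral_mono (H.pt_sq hg)) (le_of_eq ?_)
  exact H.swapL ((hg.nnnorm.coe_nnreal_ennreal).pow_const 2)

lemma Pop_memL2 (hg : Measurable g) (hg2 : MemLp g 2 π) : MemLp (Pop m P g) 2 π := by
  refine (memLp_two_iff_integrable_sq (H.Pop_meas hg).aestronglyMeasurable).2 ?_
  refine ⟨((H.Pop_meas hg).pow_const 2).aestronglyMeasurable, ?_⟩
  rw [hasFiniteIntegral_def]
  calc ∫⁻ x, ‖Pop m P g x ^ 2‖₊ ∂π = ∫⁻ x, (‖Pop m P g x‖₊ : ENNReal) ^ 2 ∂π := by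
        simp_rw [nnnorm_pow, ENNReal.coe_pow]
    _ ≤ ∫⁻ x, (‖g x‖₊ : ENNReal) ^ 2 ∂π := H.PopL2 hg
    _ < ⊤ := H.l2fin hg2

lemma Pop_sq_int_le (hg : Measurable g) (hg2 : MemLp g 2 π) :
    ∫ x, Pop m P g x ^ 2 ∂π ≤ ∫ x, g x ^ 2 ∂π := by
  rw [integral_eq_lintegral_of_nonneg_ae (Filter.Eventually.of_forall fun x => sq_nonneg _)
      ((H.Pop_meas hg).pow_const 2).aestronglyMeasurable,
    integral_eq_lintegral_of_nonneg_ae (Filter.Eventually.of_forall fun x => sq_nonneg _)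
      (hg.pow_const 2).aestronglyMeasurable]
  refine ENNReal.toReal_mono ?_ ?_
  · simp_rw [ofReal_sq]; exact (H.l2fin hg2).ne
  · simp_rw [ofReal_sq]; exact H.PopL2 hg

lemma aeInt (hg : Measurable g) (hg2 : MemLp g 2 π) :
    ∀ᵐ x ∂π, Integrable (fun y => P x y * g y) m := by
  have hmeas : Measurable fun x => ∫⁻ y, ENNReal.ofReal (P x y) * (‖g y‖₊ : ENNReal) ^ 2 ∂m :=
    Measurable.lintegral_prod_right
      (H.Pmeas.ennreal_ofReal.mul (((hg.nnnorm.coe_nnreal_ennreal).pow_const 2).comp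
        measurable_snd))
  have hfin : ∫⁻ x, (∫⁻ y, ENNReal.ofReal (P x y) * (‖g y‖₊ : ENNReal) ^ 2 ∂m) ∂π < ⊤ := by
    rw [H.swapL ((hg.nnnorm.coe_nnreal_ennreal).pow_const 2)]
    exact H.l2fin hg2
  filter_upwards [ae_lt_top hmeas hfin.ne] with x hx
  refine ⟨((H.Pml x).mul hg).aestronglyMeasurable, ?_⟩
  rw [hasFiniteIntegral_def]
  have h1 : ∫⁻ y, ‖P x y * g y‖ₑ ∂m = ∫⁻ y, ENNReal.ofReal (P x y) * (‖g y‖₊ : ENNReal) ∂m := by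
    refine lintegral_congr fun y => ?_
    rw [enorm_eq_nnnorm, nnnorm_mul, ENNReal.coe_mul, H.nnP x y]
  rw [h1]
  refine lt_of_le_of_lt (H.hold x (hg.nnnorm.coe_nnreal_ennreal)) ?_
  exact ENNReal.rpow_lt_top_of_nonneg (by norm_num) hx.ne

lemma S0 {u v : Ω → ℝ} (hu : Measurable u) (hv : Measurable v) :
    ∫ x, u x * Pop m P v x ∂π = ∫ x, ∫ y, u x * v y * (fπ x * P x y) ∂m ∂m := by
  have hd : (fun x => ENNReal.ofReal (fπ x)) = fun x => ((fπ x).toNNReal : ENNReal) := rfl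
  rw [H.πdef, hd, integral_withDensity_eq_integral_smul H.fπmeas.real_toNNReal]
  refine integral_congr_ae (Filter.Eventually.of_forall fun x => ?_)
  show (fπ x).toNNReal • (u x * Pop m P v x) = ∫ y, u x * v y * (fπ x * P x y) ∂m
  rw [NNReal.smul_def, Real.coe_toNNReal _ (H.fπpos x), smul_eq_mul,
    show fπ x * (u x * Pop m P v x) = (fπ x * u x) * Pop m P v x by ring, Pop,
    ← integral_const_mul (fπ x * u x) (fun y => P x y * v y)]
  exact integral_congr_ae (Filter.Eventually.of_forall fun y => by ring)

lemma WInt {u v : Ω → ℝ} (hu : Measurable u) (hu2 : MemLp u 2 π)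
    (hv : Measurable v) (hv2 : MemLp v 2 π) :
    Integrable (fun p : Ω × Ω => u p.1 * v p.2 * (fπ p.1 * P p.1 p.2)) (m.prod m) := by
  have hmeasW : Measurable fun p : Ω × Ω => u p.1 * v p.2 * (fπ p.1 * P p.1 p.2) :=
    ((hu.comp measurable_fst).mul (hv.comp measurable_snd)).mul
      ((H.fπmeas.comp measurable_fst).mul H.Pmeas)
  refine ⟨hmeasW.aestronglyMeasurable, ?_⟩
  rw [hasFiniteIntegral_def]
  have hnn2 : ∀ x y, (‖u x * v y * (fπ x * P x y)‖₊ : ENNReal)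
      = (ENNReal.ofReal (fπ x) * (‖u x‖₊ : ENNReal)) *
        (ENNReal.ofReal (P x y) * (‖v y‖₊ : ENNReal)) := by
    intro x y
    simp only [nnnorm_mul, ENNReal.coe_mul]
    rw [H.nnP x y, ← Real.enorm_eq_ofReal (H.fπpos x), enorm_eq_nnnorm]
    ring
  set Φ : Ω → ENNReal :=
    fun x => (∫⁻ y, ENNReal.ofReal (P x y) * (‖v y‖₊ : ENNReal) ^ 2 ∂m) ^ (1/2 : ℝ) with hΦ
  have hΦmeas : Measurable Φ :=
    (Measurable.lintegral_prod_right (H.Pmeas.ennreal_ofReal.mul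
      (((hv.nnnorm.coe_nnreal_ennreal).pow_const 2).comp measurable_snd))).pow_const _
  have step1 : ∫⁻ p, (‖u p.1 * v p.2 * (fπ p.1 * P p.1 p.2)‖₊ : ENNReal) ∂(m.prod m)
      ≤ ∫⁻ x, ENNReal.ofReal (fπ x) * ((‖u x‖₊ : ENNReal) * Φ x) ∂m := by
    rw [lintegral_prod _ hmeasW.nnnorm.coe_nnreal_ennreal.aemeasurable]
    refine lintegral_mono fun x => ?_
    calc ∫⁻ y, (‖u x * v y * (fπ x * P x y)‖₊ : ENNReal) ∂m
        = (ENNReal.ofReal (fπ x) * (‖u x‖₊ : ENNReal)) *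
            ∫⁻ y, ENNReal.ofReal (P x y) * (‖v y‖₊ : ENNReal) ∂m := by
          simp_rw [hnn2]
          rw [lintegral_const_mul (f := fun y => ENNReal.ofReal (P x y) * (‖v y‖₊ : ENNReal)) _ ((H.Pml x).ennreal_ofReal.mul
            (hv.nnnorm.coe_nnreal_ennreal))]
      _ ≤ (ENNReal.ofReal (fπ x) * (‖u x‖₊ : ENNReal)) * Φ x :=
          mul_le_mul_right (H.hold x (hv.nnnorm.coe_nnreal_ennreal)) _
      _ = ENNReal.ofReal (fπ x) * ((‖u x‖₊ : ENNReal) * Φ x) := by ring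
  refine lt_of_le_of_lt step1 ?_
  have step2 : ∫⁻ x, ENNReal.ofReal (fπ x) * ((‖u x‖₊ : ENNReal) * Φ x) ∂m
      = ∫⁻ x, (‖u x‖₊ : ENNReal) * Φ x ∂π := by
    rw [H.πdef, lintegral_withDensity_eq_lintegral_mul _ H.fπmeas.ennreal_ofReal
      (g := fun x => (‖u x‖₊ : ENNReal) * Φ x) ((hu.nnnorm.coe_nnreal_ennreal).mul hΦmeas)]
    simp only [Pi.mul_apply]
  rw [step2]
  have h2 : (2:ℝ).HolderConjugate 2 := .two_two
  have key := ENNReal.lintegral_mul_le_Lp_mul_Lq π h2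
    (hu.nnnorm.coe_nnreal_ennreal).aemeasurable hΦmeas.aemeasurable
  simp only [Pi.mul_apply] at key
  refine lt_of_le_of_lt key ?_
  have e1 : ∫⁻ x, (‖u x‖₊ : ENNReal) ^ (2:ℝ) ∂π < ⊤ := by
    have h := H.l2fin hu2
    have : ∀ x, (‖u x‖₊ : ENNReal) ^ (2:ℝ) = (‖u x‖₊ : ENNReal) ^ (2:ℕ) := by
      intro x
      rw [← ENNReal.rpow_natCast _ 2]
      norm_num
    simp_rw [this]
    exact h
  have e2 : ∫⁻ x, Φ x ^ (2:ℝ) ∂π < ⊤ := by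
    have hpt : ∀ x, Φ x ^ (2:ℝ) = ∫⁻ y, ENNReal.ofReal (P x y) * (‖v y‖₊ : ENNReal) ^ 2 ∂m := by
      intro x
      rw [hΦ, ← ENNReal.rpow_mul]
      norm_num
    simp_rw [hpt]
    rw [H.swapL ((hv.nnnorm.coe_nnreal_ennreal).pow_const 2)]
    exact H.l2fin hv2
  exact ENNReal.mul_lt_top (ENNReal.rpow_lt_top_of_nonneg (by norm_num) e1.ne)
    (ENNReal.rpow_lt_top_of_nonneg (by norm_num) e2.ne)

/-- self-adjointness of the transition operator on `L²(π)` -/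
lemma selfadj {u v : Ω → ℝ} (hu : Measurable u) (hu2 : MemLp u 2 π)
    (hv : Measurable v) (hv2 : MemLp v 2 π) :
    ∫ x, u x * Pop m P v x ∂π = ∫ x, v x * Pop m P u x ∂π := by
  rw [H.S0 hu hv, H.S0 hv hu]
  rw [integral_integral_swap (H.WInt hu hu2 hv hv2)]
  refine integral_congr_ae (Filter.Eventually.of_forall fun y => ?_)
  refine integral_congr_ae (Filter.Eventually.of_forall fun x => ?_)
  show u x * v y * (fπ x * P x y) = v y * u x * (fπ y * P y x)
  rw [H.rev x y]; ring

lemma Pop_one : Pop m P (fun _ => 1) = fun _ => (1:ℝ) := by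
  funext x
  simp only [Pop, mul_one]
  exact H.stoch x

lemma meanPop {g : Ω → ℝ} (hg : Measurable g) (hg2 : MemLp g 2 π) :
    ∫ x, Pop m P g x ∂π = ∫ x, g x ∂π := by
  haveI := H.πprob
  have h := H.selfadj (u := fun _ => (1:ℝ)) (v := g) measurable_const (memLp_const 1) hg hg2
  rw [H.Pop_one] at h
  simpa using h

omit H in
lemma mulInt {u v : Ω → ℝ} (hu : Measurable u) (hu2 : MemLp u 2 π)
    (hv : Measurable v) (hv2 : MemLp v 2 π) :
    Integrable (fun x => u x * v x) π := by
  refine Integrable.mono (hu2.integrable_sq.add hv2.integrable_sq)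
    (hu.mul hv).aestronglyMeasurable (Filter.Eventually.of_forall fun x => ?_)
  simp only [Real.norm_eq_abs, Pi.add_apply]
  rw [abs_mul, abs_of_nonneg (by positivity : (0:ℝ) ≤ u x ^ 2 + v x ^ 2)]
  nlinarith [sq_nonneg (|u x| - |v x|), sq_abs (u x), sq_abs (v x)]

lemma aeInt2 {g : Ω → ℝ} (hg : Measurable g) (hg2 : MemLp g 2 π) :
    ∀ᵐ x ∂π, Integrable (fun y => g y ^ 2 * P x y) m := by
  have hmeas : Measurable fun x => ∫⁻ y, ENNReal.ofReal (P x y) * (‖g y‖₊ : ENNReal) ^ 2 ∂m :=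
    Measurable.lintegral_prod_right
      (H.Pmeas.ennreal_ofReal.mul (((hg.nnnorm.coe_nnreal_ennreal).pow_const 2).comp
        measurable_snd))
  have hfin : ∫⁻ x, (∫⁻ y, ENNReal.ofReal (P x y) * (‖g y‖₊ : ENNReal) ^ 2 ∂m) ∂π < ⊤ := by
    rw [H.swapL ((hg.nnnorm.coe_nnreal_ennreal).pow_const 2)]
    exact H.l2fin hg2
  filter_upwards [ae_lt_top hmeas hfin.ne] with x hx
  refine ⟨((hg.pow_const 2).mul (H.Pml x)).aestronglyMeasurable, ?_⟩
  rw [hasFiniteIntegral_def]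
  refine lt_of_le_of_lt (le_of_eq (lintegral_congr fun y => ?_)) hx
  rw [enorm_eq_nnnorm, nnnorm_mul, ENNReal.coe_mul, H.nnP x y, ← ofReal_sq, ← enorm_eq_nnnorm, Real.enorm_eq_ofReal (sq_nonneg _),
    ofReal_sq, mul_comm]

lemma Qint_eq {g : Ω → ℝ} (hg : Measurable g) (hg2 : MemLp g 2 π) :
    Integrable (fun x => ∫ y, g y ^ 2 * P x y ∂m) π ∧
    ∫ x, (∫ y, g y ^ 2 * P x y ∂m) ∂π = ∫ x, g x ^ 2 ∂π := by
  set Q : Ω → ℝ := fun x => ∫ y, g y ^ 2 * P x y ∂m with hQ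
  have hQmeas : Measurable Q := by
    have : StronglyMeasurable fun p : Ω × Ω => g p.2 ^ 2 * P p.1 p.2 :=
      (((hg.comp measurable_snd).pow_const 2).mul H.Pmeas).stronglyMeasurable
    exact this.integral_prod_right'.measurable
  have hQnn : ∀ x, 0 ≤ Q x := fun x =>
    integral_nonneg fun y => mul_nonneg (sq_nonneg _) (H.Ppos x y)
  have hae : ∀ᵐ x ∂π, ENNReal.ofReal (Q x)
      = ∫⁻ y, ENNReal.ofReal (P x y) * (‖g y‖₊ : ENNReal) ^ 2 ∂m := by
    filter_upwards [H.aeInt2 hg hg2] with x hx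
    rw [hQ, ofReal_integral_eq_lintegral_ofReal hx
      (Filter.Eventually.of_forall fun y => mul_nonneg (sq_nonneg _) (H.Ppos x y))]
    refine lintegral_congr fun y => ?_
    rw [ENNReal.ofReal_mul (sq_nonneg _), ofReal_sq, mul_comm]
  have hlQ : ∫⁻ x, ENNReal.ofReal (Q x) ∂π = ∫⁻ x, (‖g x‖₊ : ENNReal) ^ 2 ∂π := by
    rw [lintegral_congr_ae hae, H.swapL ((hg.nnnorm.coe_nnreal_ennreal).pow_const 2)]
  have hQI : Integrable Q π := by
    refine ⟨hQmeas.aestronglyMeasurable, ?_⟩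
    rw [hasFiniteIntegral_def]
    have : ∀ x, ‖Q x‖ₑ = ENNReal.ofReal (Q x) := fun x =>
      Real.enorm_eq_ofReal (hQnn x)
    simp_rw [this, hlQ]
    exact H.l2fin hg2
  refine ⟨hQI, ?_⟩
  rw [integral_eq_lintegral_of_nonneg_ae (Filter.Eventually.of_forall hQnn)
      hQmeas.aestronglyMeasurable,
    integral_eq_lintegral_of_nonneg_ae (Filter.Eventually.of_forall fun x => sq_nonneg (g x))
      (hg.pow_const 2).aestronglyMeasurable]
  congr 1
  rw [hlQ]
  exact lintegral_congr fun x => (ofReal_sq (g x)).symm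

/-- the Dirichlet form identity -/
lemma dirichlet {g : Ω → ℝ} (hg : Measurable g) (hg2 : MemLp g 2 π) :
    (1/2) * ∫ x, (∫ y, (g x - g y) ^ 2 * P x y ∂m) ∂π
      = ∫ x, g x ^ 2 ∂π - ∫ x, g x * Pop m P g x ∂π := by
  set Q : Ω → ℝ := fun x => ∫ y, g y ^ 2 * P x y ∂m with hQ
  have key : ∀ᵐ x ∂π, ∫ y, (g x - g y) ^ 2 * P x y ∂m
      = g x ^ 2 - 2 * (g x * Pop m P g x) + Q x := by
    filter_upwards [H.aeInt hg hg2, H.aeInt2 hg hg2] with x h1 h2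
    have c1 : Integrable (fun y => g x ^ 2 * P x y) m := (H.PintB x).const_mul _
    have c2 : Integrable (fun y => (2 * g x) * (P x y * g y)) m := h1.const_mul _
    have e : ∫ y, (g x - g y) ^ 2 * P x y ∂m
        = ∫ y, (g x ^ 2 * P x y - (2 * g x) * (P x y * g y) + g y ^ 2 * P x y) ∂m :=
      integral_congr_ae (Filter.Eventually.of_forall fun y => by ring)
    have c12 : Integrable (fun y => g x ^ 2 * P x y - 2 * g x * (P x y * g y)) m := c1.sub c2
    rw [e, integral_add c12 h2, integral_sub c1 c2, integral_const_mul,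
      integral_const_mul, H.stoch x]
    show g x ^ 2 * 1 - 2 * g x * Pop m P g x + Q x = _
    ring
  have hB : Integrable (fun x => g x * Pop m P g x) π :=
    mulInt hg hg2 (H.Pop_meas hg) (H.Pop_memL2 hg hg2)
  rw [integral_congr_ae key]
  have hQI := (H.Qint_eq hg hg2).1
  have hQeq := (H.Qint_eq hg hg2).2
  have cout : Integrable (fun x => g x ^ 2 - 2 * (g x * Pop m P g x)) π :=
    (hg2.integrable_sq).sub (hB.const_mul 2)
  rw [integral_add cout hQI, integral_sub hg2.integrable_sq (hB.const_mul 2), integral_const_mul]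
  rw [← hQ] at hQeq
  rw [hQeq]
  ring

section Poincare
variable {lam : ℝ}
  (hlazy : ∀ g : Ω → ℝ, Measurable g → MemLp g 2 π →
      0 ≤ ∫ x, g x * (∫ y, P x y * g y ∂m) ∂π)
  (hlam : IsGLB {r : ℝ | ∃ g : Ω → ℝ, Measurable g ∧ MemLp g 2 π ∧
        (∫ x, (g x - ∫ z, g z ∂π) ^ 2 ∂π) ≠ 0 ∧
        r = ((1 / 2) * ∫ x, (∫ y, (g x - g y) ^ 2 * P x y ∂m) ∂π)
              / (∫ x, (g x - ∫ z, g z ∂π) ^ 2 ∂π)} lam)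

include hlam in
lemma poincareB {g : Ω → ℝ} (hg : Measurable g) (hg2 : MemLp g 2 π)
    (hmean : ∫ x, g x ∂π = 0) (hA : ∫ x, g x ^ 2 ∂π ≠ 0) :
    ∫ x, g x * Pop m P g x ∂π ≤ (1 - lam) * ∫ x, g x ^ 2 ∂π := by
  have hvar : (∫ x, (g x - ∫ z, g z ∂π) ^ 2 ∂π) = ∫ x, g x ^ 2 ∂π := by
    simp only [hmean, sub_zero]
  have hmem : ((1 / 2) * ∫ x, (∫ y, (g x - g y) ^ 2 * P x y ∂m) ∂π)
      / (∫ x, (g x - ∫ z, g z ∂π) ^ 2 ∂π) ∈ {r : ℝ | ∃ g : Ω → ℝ, Measurable g ∧ MemLp g 2 π ∧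
        (∫ x, (g x - ∫ z, g z ∂π) ^ 2 ∂π) ≠ 0 ∧
        r = ((1 / 2) * ∫ x, (∫ y, (g x - g y) ^ 2 * P x y ∂m) ∂π)
              / (∫ x, (g x - ∫ z, g z ∂π) ^ 2 ∂π)} := ⟨g, hg, hg2, by rw [hvar]; exact hA, rfl⟩
  have hr := hlam.1 hmem
  rw [hvar] at hr
  have hApos : 0 < ∫ x, g x ^ 2 ∂π :=
    lt_of_le_of_ne (integral_nonneg fun x => sq_nonneg _) (Ne.symm hA)
  have hE := H.dirichlet hg hg2
  have h1 : lam * ∫ x, g x ^ 2 ∂π ≤ (1 / 2) * ∫ x, (∫ y, (g x - g y) ^ 2 * P x y ∂m) ∂π :=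
    (le_div_iff₀ hApos).1 hr
  linarith

include hlazy hlam in
lemma lam_le_one : lam ≤ 1 := by
  haveI := H.πprob
  rcases Set.eq_empty_or_nonempty {r : ℝ | ∃ g : Ω → ℝ, Measurable g ∧ MemLp g 2 π ∧
        (∫ x, (g x - ∫ z, g z ∂π) ^ 2 ∂π) ≠ 0 ∧
        r = ((1 / 2) * ∫ x, (∫ y, (g x - g y) ^ 2 * P x y ∂m) ∂π)
              / (∫ x, (g x - ∫ z, g z ∂π) ^ 2 ∂π)} with hS | hS
  · exfalso
    have h1 : lam + 1 ∈ lowerBounds {r : ℝ | ∃ g : Ω → ℝ, Measurable g ∧ MemLp g 2 π ∧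
        (∫ x, (g x - ∫ z, g z ∂π) ^ 2 ∂π) ≠ 0 ∧
        r = ((1 / 2) * ∫ x, (∫ y, (g x - g y) ^ 2 * P x y ∂m) ∂π)
              / (∫ x, (g x - ∫ z, g z ∂π) ^ 2 ∂π)} := by
      rw [hS]; intro r hr; exact absurd hr (Set.notMem_empty r)
    have := hlam.2 h1
    linarith
  obtain ⟨r, g, hg, hg2, hV, hr⟩ := hS
  set c := ∫ z, g z ∂π with hc
  set gb : Ω → ℝ := fun x => g x - c with hgb
  have hgbmeas : Measurable gb := hg.sub measurable_const
  have hgb2 : MemLp gb 2 π := hg2.sub (memLp_const c)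
  have hmean : ∫ x, gb x ∂π = 0 := by
    rw [hgb]
    rw [integral_sub (hg2.integrable one_le_two) (integrable_const c)]
    simp [measure_univ, hc]
  have hVb : ∫ x, gb x ^ 2 ∂π = ∫ x, (g x - ∫ z, g z ∂π) ^ 2 ∂π := rfl
  have hEb : ∫ x, (∫ y, (gb x - gb y) ^ 2 * P x y ∂m) ∂π
      = ∫ x, (∫ y, (g x - g y) ^ 2 * P x y ∂m) ∂π := by
    refine integral_congr_ae (Filter.Eventually.of_forall fun x => ?_)
    refine integral_congr_ae (Filter.Eventually.of_forall fun y => ?_)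
    show (g x - c - (g y - c)) ^ 2 * P x y = _
    ring_nf
  have hB0 : 0 ≤ ∫ x, gb x * Pop m P gb x ∂π := hlazy gb hgbmeas hgb2
  have hD := H.dirichlet hgbmeas hgb2
  have hApos : 0 < ∫ x, gb x ^ 2 ∂π := by
    refine lt_of_le_of_ne (integral_nonneg fun x => sq_nonneg _) ?_
    rw [hVb]; exact Ne.symm hV
  have hr2 : r ≤ 1 := by
    rw [hr, ← hVb, ← hEb, div_le_one hApos]
    linarith
  have hlr : lam ≤ r := hlam.1 ⟨g, hg, hg2, hV, hr⟩
  linarith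

include hlazy hlam in
lemma contraction {g : Ω → ℝ} (hg : Measurable g) (hg2 : MemLp g 2 π)
    (hmean : ∫ x, g x ∂π = 0) :
    ∫ x, Pop m P g x ^ 2 ∂π ≤ (1 - lam) ^ 2 * ∫ x, g x ^ 2 ∂π := by
  haveI := H.πprob
  have hl1 : lam ≤ 1 := H.lam_le_one hlazy hlam
  set A := ∫ x, g x ^ 2 ∂π with hA
  set C2 := ∫ x, Pop m P g x ^ 2 ∂π with hC2
  have hC2le : C2 ≤ A := H.Pop_sq_int_le hg hg2
  have hAnn : 0 ≤ A := integral_nonneg fun x => sq_nonneg _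
  have hC2nn : 0 ≤ C2 := integral_nonneg fun x => sq_nonneg _
  have Pgmeas : Measurable (Pop m P g) := H.Pop_meas hg
  have Pg2 : MemLp (Pop m P g) 2 π := H.Pop_memL2 hg hg2
  by_cases hA0 : A = 0
  · rw [hA0, mul_zero]; linarith
  by_cases hC20 : C2 = 0
  · rw [hC20]; positivity
  have hC2pos : 0 < C2 := lt_of_le_of_ne hC2nn (Ne.symm hC20)
  have hmeanPg : ∫ x, Pop m P g x ∂π = 0 := (H.meanPop hg hg2).trans hmean
  have PPgmeas : Measurable (Pop m P (Pop m P g)) := H.Pop_meas Pgmeas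
  have PPg2 : MemLp (Pop m P (Pop m P g)) 2 π := H.Pop_memL2 Pgmeas Pg2
  set B := ∫ x, g x * Pop m P g x ∂π with hB
  set D := ∫ x, Pop m P g x * Pop m P (Pop m P g) x ∂π with hD
  have hB0 : 0 ≤ B := hlazy g hg hg2
  have hD0 : 0 ≤ D := hlazy (Pop m P g) Pgmeas Pg2
  have hBle : B ≤ (1 - lam) * A := H.poincareB hlam hg hg2 hmean hA0
  have hDle : D ≤ (1 - lam) * C2 := H.poincareB hlam Pgmeas Pg2 hmeanPg hC20
  have hgPPg : ∫ x, g x * Pop m P (Pop m P g) x ∂π = C2 := by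
    rw [H.selfadj hg hg2 Pgmeas Pg2, hC2]
    exact integral_congr_ae (Filter.Eventually.of_forall fun x => (pow_two (Pop m P g x)).symm)
  have quad : ∀ t : ℝ, 0 ≤ B + 2 * t * C2 + t ^ 2 * D := by
    intro t
    have hwmeas : Measurable fun x => g x + t * Pop m P g x := hg.add (Pgmeas.const_mul t)
    have hw2 : MemLp (fun x => g x + t * Pop m P g x) 2 π := hg2.add (Pg2.const_mul t)
    have h0 := hlazy (fun x => g x + t * Pop m P g x) hwmeas hw2
    have hae : ∀ᵐ x ∂π, ∫ y, P x y * (g y + t * Pop m P g y) ∂m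
        = Pop m P g x + t * Pop m P (Pop m P g) x := by
      filter_upwards [H.aeInt hg hg2, H.aeInt Pgmeas Pg2] with x h1 h2
      rw [show (∫ y, P x y * (g y + t * Pop m P g y) ∂m)
          = ∫ y, (P x y * g y + t * (P x y * Pop m P g y)) ∂m from
        integral_congr_ae (Filter.Eventually.of_forall fun y => by ring)]
      have h2' : Integrable (fun y => t * (P x y * Pop m P g y)) m := h2.const_mul t
      rw [integral_add h1 h2', integral_const_mul]
      rfl
    have heq : ∫ x, (g x + t * Pop m P g x) * (∫ y, P x y * (g y + t * Pop m P g y) ∂m) ∂π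
        = B + 2 * t * C2 + t ^ 2 * D := by
      rw [integral_congr_ae (hae.mono fun x hx => by rw [hx])]
      have e : ∀ x, (g x + t * Pop m P g x) * (Pop m P g x + t * Pop m P (Pop m P g) x)
          = g x * Pop m P g x + t * (g x * Pop m P (Pop m P g) x)
            + (t * (Pop m P g x * Pop m P g x)
            + t ^ 2 * (Pop m P g x * Pop m P (Pop m P g) x)) := fun x => by ring
      simp_rw [e]
      have i1 : Integrable (fun x => g x * Pop m P g x) π := mulInt hg hg2 Pgmeas Pg2
      have i2 : Integrable (fun x => t * (g x * Pop m P (Pop m P g) x)) π :=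
        (mulInt hg hg2 PPgmeas PPg2).const_mul t
      have i3 : Integrable (fun x => t * (Pop m P g x * Pop m P g x)) π :=
        (mulInt Pgmeas Pg2 Pgmeas Pg2).const_mul t
      have i4 : Integrable (fun x => t ^ 2 * (Pop m P g x * Pop m P (Pop m P g) x)) π :=
        (mulInt Pgmeas Pg2 PPgmeas PPg2).const_mul _
      have i12 : Integrable (fun x => g x * Pop m P g x
          + t * (g x * Pop m P (Pop m P g) x)) π := i1.add i2
      have i34 : Integrable (fun x => t * (Pop m P g x * Pop m P g x)
          + t ^ 2 * (Pop m P g x * Pop m P (Pop m P g) x)) π := i3.add i4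
      rw [integral_add i12 i34, integral_add i1 i2, integral_add i3 i4,
        integral_const_mul, integral_const_mul, integral_const_mul, hgPPg]
      have hPgPg : ∫ x, Pop m P g x * Pop m P g x ∂π = C2 := by
        rw [hC2]
        exact integral_congr_ae (Filter.Eventually.of_forall fun x => (pow_two (Pop m P g x)).symm)
      rw [hPgPg, ← hB, ← hD]
      ring
    linarith [heq ▸ h0]
  have hcs : C2 ^ 2 ≤ B * D := by
    have hd := discrim_le_zero (a := D) (b := 2 * C2) (c := B) fun t => by nlinarith [quad t]
    rw [discrim] at hd
    nlinarith [hd]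
  have hfinal : C2 * C2 ≤ ((1 - lam) ^ 2 * A) * C2 := by
    calc C2 * C2 = C2 ^ 2 := (sq C2).symm
      _ ≤ B * D := hcs
      _ ≤ ((1 - lam) * A) * ((1 - lam) * C2) := by
          refine mul_le_mul hBle hDle hD0 ?_
          have : 0 ≤ 1 - lam := by linarith
          positivity
      _ = ((1 - lam) ^ 2 * A) * C2 := by ring
  exact le_of_mul_le_mul_right hfinal hC2pos

end Poincare
end Hyp
end MixAux

open MixAux

/-- For a reversible, strongly `π`-irreducible lazy Markov chain with Poincaré constant
`λ > 0`, started from a distribution `μ ≪ π`, the distribution after `t` steps satisfies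
`‖P^t(μ,·) − π‖_TV ≤ (1/2)(1−λ)^t √(Var_π(f_μ/f_π))`. -/
theorem mixing_from_poincare
    {Ω : Type*} [MeasurableSpace Ω] (m : Measure Ω) [SigmaFinite m]
    (fπ : Ω → ℝ) (hfπpos : ∀ x, 0 ≤ fπ x) (hfπmeas : Measurable fπ)
    (π : Measure Ω) (hπ : π = m.withDensity (fun x => ENNReal.ofReal (fπ x)))
    (hπprob : IsProbabilityMeasure π)
    (P : Ω → Ω → ℝ) (hPpos : ∀ x y, 0 ≤ P x y)
    (hPmeas : Measurable fun p : Ω × Ω => P p.1 p.2)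
    (hstoch : ∀ x, ∫ y, P x y ∂m = 1)
    -- reversibility with respect to `π`
    (hrev : ∀ x y, fπ x * P x y = fπ y * P y x)
    -- laziness: the transition operator has nonnegative spectrum
    (hlazy : ∀ g : Ω → ℝ, Measurable g → MemLp g 2 π →
      0 ≤ ∫ x, g x * (∫ y, P x y * g y ∂m) ∂π)
    -- strong `π`-irreducibility (`Pt t` is the `t`-step transition density)
    (Pt : ℕ → Ω → Ω → ℝ) (hPt1 : Pt 1 = P)
    (hPtsucc : ∀ t x y, 1 ≤ t → Pt (t + 1) x y = ∫ z, Pt t x z * P z y ∂m)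
    (hirr : ∀ B : Set Ω, MeasurableSet B → 0 < π B →
      ∀ x, ∃ t : ℕ, 1 ≤ t ∧ ∀ s : ℕ, t ≤ s → 0 < ∫ y in B, Pt s x y ∂m)
    -- `lam` is the Poincaré constant (spectral gap) of the chain, and it is positive
    (lam : ℝ) (hlampos : 0 < lam)
    (hlam : IsGLB {r : ℝ | ∃ g : Ω → ℝ, Measurable g ∧ MemLp g 2 π ∧
        (∫ x, (g x - ∫ z, g z ∂π) ^ 2 ∂π) ≠ 0 ∧
        r = ((1 / 2) * ∫ x, (∫ y, (g x - g y) ^ 2 * P x y ∂m) ∂π)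
              / (∫ x, (g x - ∫ z, g z ∂π) ^ 2 ∂π)} lam)
    -- starting distribution `μ` with density `fμ` w.r.t. `m`, absolutely continuous
    -- w.r.t. `π` with density ratio in `L²(π)`
    (fμ : Ω → ℝ) (hfμpos : ∀ x, 0 ≤ fμ x) (hfμmeas : Measurable fμ)
    (μ : Measure Ω) (hμ : μ = m.withDensity (fun x => ENNReal.ofReal (fμ x)))
    (hμprob : IsProbabilityMeasure μ) (hac : μ ≪ π)
    (hratioL2 : MemLp (fun x => fμ x / fπ x) 2 π)
    -- `ft t` is the density (w.r.t. `m`) of the distribution after `t` steps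
    (ft : ℕ → Ω → ℝ) (hft0 : ft 0 = fμ)
    (hftsucc : ∀ t x, ft (t + 1) x = ∫ y, ft t y * P y x ∂m) :
    ∀ t : ℕ,
      (1 / 2) * ∫ x, |ft t x - fπ x| ∂m
        ≤ (1 / 2) * (1 - lam) ^ t *
            Real.sqrt (∫ x, (fμ x / fπ x - ∫ z, fμ z / fπ z ∂π) ^ 2 ∂π) := by
  have H : Hyp m fπ P π := ⟨hfπpos, hfπmeas, hπ, hπprob, hPpos, hPmeas, hstoch, hrev⟩
  have hπ' : π = m.withDensity fun x => ((fπ x).toNNReal : ENNReal) := by rw [hπ]; rfl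
  haveI := hπprob
  have hl1 : lam ≤ 1 := H.lam_le_one hlazy hlam
  -- fμ vanishes a.e. where fπ vanishes
  have hset : MeasurableSet {x | fπ x = 0} := hfπmeas (measurableSet_singleton 0)
  have hZ : ∀ᵐ x ∂m, fπ x = 0 → fμ x = 0 := by
    have hπ0 : π {x | fπ x = 0} = 0 := by
      rw [hπ, withDensity_apply _ hset]
      rw [setLIntegral_congr_fun hset (id
        (fun x (hx : fπ x = 0) => by simp [hx] : ∀ x ∈ {x | fπ x = 0},
          ENNReal.ofReal (fπ x) = 0))]
      simp
    have hμ0 : μ {x | fπ x = 0} = 0 := hac hπ0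
    rw [hμ, withDensity_apply _ hset] at hμ0
    have := (lintegral_eq_zero_iff (hfμmeas.ennreal_ofReal)).1 hμ0
    rw [Filter.EventuallyEq, ae_restrict_iff' hset] at this
    filter_upwards [this] with x hx hfx
    have h0 := hx hfx
    simp only [Pi.zero_apply, ENNReal.ofReal_eq_zero] at h0
    linarith [hfμpos x]
  -- total mass of fμ
  have hμuniv : ∫⁻ x, ENNReal.ofReal (fμ x) ∂m = 1 := by
    have : μ Set.univ = 1 := hμprob.measure_univ
    rw [hμ, withDensity_apply _ MeasurableSet.univ, Measure.restrict_univ] at this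
    exact this
  have hfμint : Integrable fμ m := by
    refine ⟨hfμmeas.aestronglyMeasurable, ?_⟩
    rw [hasFiniteIntegral_def]
    have : ∀ x, ‖fμ x‖ₑ = ENNReal.ofReal (fμ x) := fun x =>
      Real.enorm_eq_ofReal (hfμpos x)
    simp_rw [this, hμuniv]
    norm_num
  have hintfμ : ∫ x, fμ x ∂m = 1 := by
    rw [integral_eq_lintegral_of_nonneg_ae (Filter.Eventually.of_forall hfμpos)
      hfμmeas.aestronglyMeasurable, hμuniv]
    simp
  -- mean of the density ratio
  have hmean0 : ∫ x, fμ x / fπ x ∂π = 1 := by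
    rw [hπ', integral_withDensity_eq_integral_smul hfπmeas.real_toNNReal]
    have heq : (fun x => (fπ x).toNNReal • (fμ x / fπ x)) =ᵐ[m] fμ := by
      filter_upwards [hZ] with x hx
      by_cases hfx : fπ x = 0
      · simp [hfx, hx hfx]
      · rw [NNReal.smul_def, Real.coe_toNNReal _ (hfπpos x), smul_eq_mul, mul_comm,
          div_mul_cancel₀ _ hfx]
    rw [integral_congr_ae heq, hintfμ]
  -- the iterated density ratio
  set h : ℕ → Ω → ℝ := fun t => Nat.rec (motive := fun _ => Ω → ℝ)
    (fun x => fμ x / fπ x) (fun _ g => Pop m P g) t with hdef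
  have hh0 : h 0 = fun x => fμ x / fπ x := rfl
  have hhs : ∀ t, h (t + 1) = Pop m P (h t) := fun t => rfl
  have main : ∀ t : ℕ, Measurable (h t) ∧ MemLp (h t) 2 π ∧
      (ft t =ᵐ[m] fun x => fπ x * h t x) ∧ (∫ x, h t x ∂π = 1) ∧
      (∫ x, (h t x - 1) ^ 2 ∂π ≤ ((1 - lam) ^ t) ^ 2 * ∫ x, (h 0 x - 1) ^ 2 ∂π) := by
    intro t
    induction t with
    | zero =>
      refine ⟨hfμmeas.div hfπmeas, hratioL2, ?_, hmean0, by norm_num⟩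
      filter_upwards [hZ] with x hx
      rw [hft0, hh0]
      by_cases hfx : fπ x = 0
      · simp [hfx, hx hfx]
      · rw [mul_comm, div_mul_cancel₀ _ hfx]
    | succ t ih =>
      obtain ⟨hm, hl2, hft_ae, hmean, hvar⟩ := ih
      have hm' : Measurable (h (t + 1)) := by rw [hhs]; exact H.Pop_meas hm
      have hl2' : MemLp (h (t + 1)) 2 π := by rw [hhs]; exact H.Pop_memL2 hm hl2
      refine ⟨hm', hl2', ?_, ?_, ?_⟩
      · refine Filter.Eventually.of_forall fun x => ?_
        rw [hftsucc t x]
        calc ∫ y, ft t y * P y x ∂m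
            = ∫ y, (fπ y * h t y) * P y x ∂m :=
              integral_congr_ae (hft_ae.mono fun y hy => by simp only [hy])
          _ = ∫ y, fπ x * (P x y * h t y) ∂m := by
              refine integral_congr_ae (Filter.Eventually.of_forall fun y => ?_)
              show fπ y * h t y * P y x = fπ x * (P x y * h t y)
              rw [show fπ y * h t y * P y x = h t y * (fπ y * P y x) from by ring, hrev y x]
              ring
          _ = fπ x * ∫ y, P x y * h t y ∂m := integral_const_mul _ _
          _ = fπ x * h (t + 1) x := by rw [hhs]; rfl
      · rw [hhs]; rw [H.meanPop hm hl2, hmean]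
      · set u : Ω → ℝ := fun x => h t x - 1 with hu
        have humeas : Measurable u := hm.sub measurable_const
        have hu2 : MemLp u 2 π := hl2.sub (memLp_const 1)
        have humean : ∫ x, u x ∂π = 0 := by
          rw [hu, integral_sub (hl2.integrable one_le_two) (integrable_const 1), hmean]
          simp
        have hPu : (fun x => h (t + 1) x - 1) =ᵐ[π] Pop m P u := by
          filter_upwards [H.aeInt hm hl2] with x hx
          rw [hhs]
          have e1 : ∫ y, P x y * u y ∂m = ∫ y, (P x y * h t y - P x y) ∂m :=
            integral_congr_ae (Filter.Eventually.of_forall fun y => by rw [hu]; ring)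
          have e2 : Pop m P u x = Pop m P (h t) x - 1 := by
            show (∫ y, P x y * u y ∂m) = _
            rw [e1, integral_sub hx (H.PintB x), hstoch x]
            rfl
          rw [e2]
        have hvar1 : ∫ x, (h (t + 1) x - 1) ^ 2 ∂π = ∫ x, Pop m P u x ^ 2 ∂π :=
          integral_congr_ae (hPu.mono fun x hx => by simp only [hx])
        have hcontr := H.contraction hlazy hlam humeas hu2 humean
        have hstep : ∫ x, u x ^ 2 ∂π ≤ ((1 - lam) ^ t) ^ 2 * ∫ x, (h 0 x - 1) ^ 2 ∂π := hvar
        rw [hvar1]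
        calc ∫ x, Pop m P u x ^ 2 ∂π ≤ (1 - lam) ^ 2 * ∫ x, u x ^ 2 ∂π := hcontr
          _ ≤ (1 - lam) ^ 2 * (((1 - lam) ^ t) ^ 2 * ∫ x, (h 0 x - 1) ^ 2 ∂π) := by
              refine mul_le_mul_of_nonneg_left hstep (by positivity)
          _ = ((1 - lam) ^ (t + 1)) ^ 2 * ∫ x, (h 0 x - 1) ^ 2 ∂π := by ring
  intro t
  obtain ⟨hm, hl2, hft_ae, hmean, hvar⟩ := main t
  have h1lnn : (0:ℝ) ≤ 1 - lam := by linarith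
  -- reduce the total variation integral to π
  have e1 : ∫ x, |h t x - 1| ∂π = ∫ x, |ft t x - fπ x| ∂m := by
    rw [hπ', integral_withDensity_eq_integral_smul hfπmeas.real_toNNReal]
    refine integral_congr_ae ?_
    filter_upwards [hft_ae] with x hx
    show (fπ x).toNNReal • |h t x - 1| = |ft t x - fπ x|
    simp only [hx]
    rw [show fπ x * h t x - fπ x = fπ x * (h t x - 1) from by ring, abs_mul,
      abs_of_nonneg (hfπpos x), NNReal.smul_def, Real.coe_toNNReal _ (hfπpos x), smul_eq_mul]
  -- Cauchy–Schwarz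
  have habs2 : MemLp (fun x => |h t x - 1|) 2 π := by
    have := (hl2.sub (memLp_const 1)).norm
    simpa [Real.norm_eq_abs] using this
  have hcs : ∫ x, |h t x - 1| ∂π ≤ Real.sqrt (∫ x, (h t x - 1) ^ 2 ∂π) := by
    have h22 : (2:ℝ).HolderConjugate 2 := .two_two
    have hof : ENNReal.ofReal (2:ℝ) = 2 := by norm_num
    have key := integral_mul_le_Lp_mul_Lq_of_nonneg (μ := π) h22
      (f := fun x => |h t x - 1|) (g := fun _ => (1:ℝ))
      (Filter.Eventually.of_forall fun x => abs_nonneg _)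
      (Filter.Eventually.of_forall fun _ => zero_le_one)
      (by rw [hof]; exact habs2) (by rw [hof]; exact memLp_const 1)
    simp only [mul_one, Real.one_rpow] at key
    have e2 : ∫ a, |h t a - 1| ^ (2:ℝ) ∂π = ∫ a, (h t a - 1) ^ 2 ∂π := by
      refine integral_congr_ae (Filter.Eventually.of_forall fun a => ?_)
      show |h t a - 1| ^ (2:ℝ) = (h t a - 1) ^ 2
      rw [show ((2:ℝ)) = ((2:ℕ):ℝ) by norm_num, Real.rpow_natCast, sq_abs]
    rw [e2] at key
    have e3 : ∫ _a, (1:ℝ) ∂π = 1 := by simp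
    rw [e3, Real.one_rpow, mul_one] at key
    rwa [Real.sqrt_eq_rpow]
  -- contraction of the variance
  have hsq : Real.sqrt (∫ x, (h t x - 1) ^ 2 ∂π)
      ≤ (1 - lam) ^ t * Real.sqrt (∫ x, (h 0 x - 1) ^ 2 ∂π) := by
    refine le_trans (Real.sqrt_le_sqrt hvar) (le_of_eq ?_)
    rw [Real.sqrt_mul (sq_nonneg _), Real.sqrt_sq (by positivity)]
  -- identify the right-hand side
  have hrhs : Real.sqrt (∫ x, (fμ x / fπ x - ∫ z, fμ z / fπ z ∂π) ^ 2 ∂π)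
      = Real.sqrt (∫ x, (h 0 x - 1) ^ 2 ∂π) := by
    rw [hmean0, hh0]
  rw [hrhs]
  calc (1 / 2) * ∫ x, |ft t x - fπ x| ∂m
      = (1 / 2) * ∫ x, |h t x - 1| ∂π := by rw [e1]
    _ ≤ (1 / 2) * Real.sqrt (∫ x, (h t x - 1) ^ 2 ∂π) := by linarith
    _ ≤ (1 / 2) * ((1 - lam) ^ t * Real.sqrt (∫ x, (h 0 x - 1) ^ 2 ∂π)) := by linarith
    _ = (1 / 2) * (1 - lam) ^ t * Real.sqrt (∫ x, (h 0 x - 1) ^ 2 ∂π) := by ring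
end

section
/- Let M = (Ω, P, π) be the Gibbs sampler for a discrete k-DPP, fix an element i, and let M_ī be the restriction of the chain to states not containing i with stationary distribution π_ī. For any state x containing i, let N_ī(x) be its neighbors not containing i, and for any A ⊆ Ω_ī partition N_ī(x) into N_A = N_ī(x)∩A and N_Ā = N_ī(x)∖A. Then Q(x, N_A) + Q(N_A, N_Ā) ≥ π(Ω_ī) · Q_ī(N_A, N_Ā), where Q(x,y) = π(x)P(x,y) and Q_ī is the ergodic flow of the restricted chain. -/
open Finset

/-- Determinant of the principal submatrix of `L` indexed by the finite set `S`. -/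
noncomputable def gramDet {n : ℕ} (L : Matrix (Fin n) (Fin n) ℝ)
    (S : Finset (Fin n)) : ℝ :=
  Matrix.det (Matrix.of (fun i j : {x // x ∈ S} => L i.1 j.1))

/-- The `k`-DPP distribution on size-`k` subsets: `π(S) ∝ det(L_S)`. -/
noncomputable def dpp {n : ℕ} (L : Matrix (Fin n) (Fin n) ℝ) (k : ℕ)
    (S : Finset (Fin n)) : ℝ :=
  if S.card = k then
    gramDet L S / ∑ T ∈ univ.filter (fun T : Finset (Fin n) => T.card = k), gramDet L T
  else 0

/-- Normalizing constant of the conditional distribution given the set `I`: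
`π(I) = Σ_{j ∉ I} π(I ∪ {j})`. -/
noncomputable def condZ {n : ℕ} (π : Finset (Fin n) → ℝ) (I : Finset (Fin n)) : ℝ :=
  ∑ j ∈ Iᶜ, π (insert j I)

/-- Transition density of the Gibbs sampler for a `k`-DPP `π`. -/
noncomputable def gibbsP {n : ℕ} (π : Finset (Fin n) → ℝ) (k : ℕ)
    (x y : Finset (Fin n)) : ℝ :=
  (1 / (k : ℝ)) *
    ∑ i ∈ x, (if x.erase i ⊆ y ∧ y.card = k then π y / condZ π (x.erase i) else 0)

/-- Ergodic flow of the Gibbs sampler: `Q(A,B) = Σ_{a∈A,b∈B} π(a)P(a,b)`. -/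
noncomputable def flow {n : ℕ} (π : Finset (Fin n) → ℝ) (k : ℕ)
    (A B : Finset (Finset (Fin n))) : ℝ :=
  ∑ a ∈ A, ∑ b ∈ B, π a * gibbsP π k a b

/-- Transition density of the Gibbs sampler restricted to states not containing `i`:
`P_ī(x,y) = (1/k)·π(y)/(π(I) − π(I+i))` for `I = x ∩ y` of size `k−1`. -/
noncomputable def gibbsPRes {n : ℕ} (π : Finset (Fin n) → ℝ) (k : ℕ) (i : Fin n)
    (x y : Finset (Fin n)) : ℝ :=
  if x ≠ y ∧ x.card = k ∧ y.card = k ∧ i ∉ x ∧ i ∉ y ∧ (x ∩ y).card = k - 1 then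
    (1 / (k : ℝ)) * π y / (condZ π (x ∩ y) - π (insert i (x ∩ y)))
  else 0

/-- Ergodic flow of the restricted chain: `Q_ī(A,B) = Σ π_ī(a)P_ī(a,b)` where
`π_ī(a) = π(a)/π(Ω_ī)`. -/
noncomputable def flowRes {n : ℕ} (π : Finset (Fin n) → ℝ) (k : ℕ) (i : Fin n)
    (A B : Finset (Finset (Fin n))) : ℝ :=
  ∑ a ∈ A, ∑ b ∈ B,
    (π a / ∑ z ∈ univ.filter (fun z : Finset (Fin n) => z.card = k ∧ i ∉ z), π z)
      * gibbsPRes π k i a b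

lemma psd_det_nonneg {m : Type*} [Fintype m] [DecidableEq m] {M : Matrix m m ℝ}
    (hM : M.PosSemidef) : 0 ≤ M.det := by
  rw [hM.isHermitian.det_eq_prod_eigenvalues]
  apply Finset.prod_nonneg
  intro i _
  simpa using hM.eigenvalues_nonneg i

lemma key_ineq (p a b : ℝ) (hp : 0 ≤ p) (ha : 0 ≤ a) (hb : 0 ≤ b) :
    a * b / (a + b) ≤ p * a / (p + a + b) + a * b / (p + a + b) := by
  rcases eq_or_lt_of_le (by linarith : (0:ℝ) ≤ a + b) with h | h
  · have ha0 : a = 0 := by linarith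
    have hb0 : b = 0 := by linarith
    simp [ha0, hb0]
  · have hZ : 0 < p + a + b := by linarith
    rw [← add_div, div_le_div_iff₀ h hZ]
    nlinarith [mul_nonneg hp (mul_nonneg ha ha)]

/-- For the Gibbs sampler of a discrete `k`-DPP `π`, a state `x` containing `i`,
its neighbor set `N_ī(x)` among states not containing `i`, and any `A ⊆ Ω_ī`
partitioning `N_ī(x)` into `N_A` and `N_Ā`:
`Q(x, N_A) + Q(N_A, N_Ā) ≥ π(Ω_ī) · Q_ī(N_A, N_Ā)`. -/
theorem gibbs_flow_restriction_lemma {n k : ℕ} (hk : 1 ≤ k) (hkn : k ≤ n)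
    (L : Matrix (Fin n) (Fin n) ℝ) (hL : L.PosSemidef)
    (hZ : 0 < ∑ T ∈ univ.filter (fun T : Finset (Fin n) => T.card = k), gramDet L T)
    (i : Fin n)
    (x : Finset (Fin n)) (hx : x.card = k) (hix : i ∈ x)
    (A : Finset (Finset (Fin n))) (hA : ∀ y ∈ A, y.card = k ∧ i ∉ y) :
    flow (dpp L k) k {x}
        ((univ.filter (fun y : Finset (Fin n) =>
            y.card = k ∧ i ∉ y ∧ x.erase i ⊆ y)) ∩ A)
      + flow (dpp L k) k
        ((univ.filter (fun y : Finset (Fin n) =>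
            y.card = k ∧ i ∉ y ∧ x.erase i ⊆ y)) ∩ A)
        ((univ.filter (fun y : Finset (Fin n) =>
            y.card = k ∧ i ∉ y ∧ x.erase i ⊆ y)) \ A)
      ≥ (∑ z ∈ univ.filter (fun z : Finset (Fin n) => z.card = k ∧ i ∉ z), dpp L k z)
          * flowRes (dpp L k) k i
            ((univ.filter (fun y : Finset (Fin n) =>
                y.card = k ∧ i ∉ y ∧ x.erase i ⊆ y)) ∩ A)
            ((univ.filter (fun y : Finset (Fin n) =>
                y.card = k ∧ i ∉ y ∧ x.erase i ⊆ y)) \ A) := by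
  classical
  set π := dpp L k with hπdef
  have hπ0 : ∀ S : Finset (Fin n), 0 ≤ π S := by
    intro S
    rw [hπdef]
    unfold dpp
    split
    · exact div_nonneg (psd_det_nonneg (hL.submatrix _)) hZ.le
    · exact le_refl 0
  set I := x.erase i with hI
  have hiI : i ∉ I := by rw [hI]; exact Finset.notMem_erase i x
  have hIcard : I.card = k - 1 := by rw [hI, Finset.card_erase_of_mem hix, hx]
  have hxI : insert i I = x := by rw [hI]; exact Finset.insert_erase hix
  set N := univ.filter (fun y : Finset (Fin n) => y.card = k ∧ i ∉ y ∧ I ⊆ y) with hN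
  have hmemN : ∀ y : Finset (Fin n), y ∈ N ↔ y.card = k ∧ i ∉ y ∧ I ⊆ y := by
    intro y; rw [hN]; simp
  have hrep : ∀ y ∈ N, ∃ j, j ∉ I ∧ j ≠ i ∧ y = insert j I := by
    intro y hy
    rw [hmemN] at hy
    obtain ⟨hyc, hiy, hIy⟩ := hy
    have hcard : (y \ I).card = 1 := by
      rw [Finset.card_sdiff_of_subset hIy, hyc, hIcard]; omega
    obtain ⟨j, hj⟩ := Finset.card_eq_one.mp hcard
    have hjy : j ∈ y \ I := by rw [hj]; exact Finset.mem_singleton_self j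
    rw [Finset.mem_sdiff] at hjy
    refine ⟨j, hjy.2, ?_, ?_⟩
    · rintro rfl; exact hiy hjy.1
    · refine (Finset.eq_of_subset_of_card_le ?_ ?_).symm
      · exact Finset.insert_subset hjy.1 hIy
      · rw [Finset.card_insert_of_notMem hjy.2, hyc, hIcard]; omega
  set Zc := condZ π I with hZc
  have hZc0 : 0 ≤ Zc := by
    rw [hZc]; exact Finset.sum_nonneg fun j _ => hπ0 _
  -- Lemma A
  have hPx : ∀ y ∈ N, gibbsP π k x y = (1/(k:ℝ)) * (π y / Zc) := by
    intro y hy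
    rw [hmemN] at hy
    obtain ⟨hyc, hiy, hIy⟩ := hy
    unfold gibbsP
    congr 1
    rw [Finset.sum_eq_single_of_mem i hix]
    · rw [← hI, if_pos ⟨hIy, hyc⟩, ← hZc]
    · intro j hjx hji
      rw [if_neg]
      rintro ⟨hsub, -⟩
      exact hiy (hsub (Finset.mem_erase.mpr ⟨Ne.symm hji, hix⟩))
  -- Lemma B
  have hPab : ∀ a ∈ N, ∀ b ∈ N, a ≠ b → gibbsP π k a b = (1/(k:ℝ)) * (π b / Zc) := by
    intro a ha b hb hab
    have hbc : b.card = k := ((hmemN b).mp hb).1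
    obtain ⟨ja, hjaI, hjai, rfl⟩ := hrep a ha
    obtain ⟨jb, hjbI, hjbi, rfl⟩ := hrep b hb
    have hjab : ja ≠ jb := by rintro rfl; exact hab rfl
    unfold gibbsP
    congr 1
    rw [Finset.sum_eq_single_of_mem ja (Finset.mem_insert_self ja I)]
    · rw [Finset.erase_insert hjaI, if_pos ⟨Finset.subset_insert _ _, hbc⟩, ← hZc]
    · intro j hj hjja
      rw [if_neg]
      rintro ⟨hsub, -⟩
      have hjaIn : ja ∈ (insert ja I).erase j :=
        Finset.mem_erase.mpr ⟨Ne.symm hjja, Finset.mem_insert_self _ _⟩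
      rcases Finset.mem_insert.mp (hsub hjaIn) with h | h
      · exact hjab h
      · exact hjaI h
  -- Lemma C
  have hPres : ∀ a ∈ N, ∀ b ∈ N, a ≠ b →
      gibbsPRes π k i a b = 1/(k:ℝ) * π b / (Zc - π x) := by
    intro a ha b hb hab
    have haN := (hmemN a).mp ha
    have hbN := (hmemN b).mp hb
    have hIab : a ∩ b = I := by
      obtain ⟨ja, hjaI, hjai, rfl⟩ := hrep a ha
      obtain ⟨jb, hjbI, hjbi, rfl⟩ := hrep b hb
      have hjab : ja ≠ jb := by rintro rfl; exact hab rfl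
      ext z
      simp only [Finset.mem_inter, Finset.mem_insert]
      constructor
      · rintro ⟨h1 | h1, h2 | h2⟩
        · exact absurd (h1.symm.trans h2) hjab
        · exact h2
        · exact h1
        · exact h1
      · intro hz; exact ⟨Or.inr hz, Or.inr hz⟩
    unfold gibbsPRes
    rw [if_pos ⟨hab, haN.1, hbN.1, haN.2.1, hbN.2.1, by rw [hIab, hIcard]⟩,
      hIab, hxI, ← hZc]
  -- Lemma D : Zc = π x + sum over N
  have hZsplit : Zc = π x + ∑ y ∈ N, π y := by
    rw [hZc]
    unfold condZ
    have hiIc : i ∈ Iᶜ := Finset.mem_compl.mpr hiI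
    rw [← Finset.insert_erase hiIc, Finset.sum_insert (Finset.notMem_erase _ _), hxI]
    congr 1
    have himg : (Iᶜ.erase i).image (fun j => insert j I) = N := by
      ext y
      simp only [Finset.mem_image, Finset.mem_erase, Finset.mem_compl]
      rw [hmemN]
      constructor
      · rintro ⟨j, ⟨hji, hjI⟩, rfl⟩
        refine ⟨?_, ?_, Finset.subset_insert _ _⟩
        · rw [Finset.card_insert_of_notMem hjI, hIcard]; omega
        · intro hmem
          rcases Finset.mem_insert.mp hmem with h | h
          · exact hji h.symm
          · exact hiI h
      · intro hy
        obtain ⟨j, hjI, hji, rfl⟩ := hrep y ((hmemN y).mpr hy)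
        exact ⟨j, ⟨hji, hjI⟩, rfl⟩
    rw [← himg, Finset.sum_image]
    intro a ha b hb hab
    have haI : a ∉ I := (Finset.mem_compl.mp (Finset.mem_of_mem_erase ha))
    have := Finset.mem_insert_self a I
    rw [show insert a I = insert b I from hab] at this
    rcases Finset.mem_insert.mp this with h | h
    · exact h
    · exact absurd h haI
  -- abbreviations
  set Na := N ∩ A with hNa
  set Nb := N \ A with hNb
  set Sa := ∑ y ∈ Na, π y with hSa
  set Sb := ∑ y ∈ Nb, π y with hSb
  have hSa0 : 0 ≤ Sa := by rw [hSa]; exact Finset.sum_nonneg fun _ _ => hπ0 _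
  have hSb0 : 0 ≤ Sb := by rw [hSb]; exact Finset.sum_nonneg fun _ _ => hπ0 _
  have hZeq : Zc = π x + Sa + Sb := by
    rw [hZsplit, hSa, hSb, hNa, hNb, add_assoc, Finset.sum_inter_add_sum_sdiff]
  have hD : Zc - π x = Sa + Sb := by rw [hZeq]; ring
  have hmemNa : ∀ b ∈ Na, b ∈ N := by
    intro b hb; rw [hNa] at hb; exact (Finset.mem_inter.mp hb).1
  have hmemNb : ∀ b ∈ Nb, b ∈ N := by
    intro b hb; rw [hNb] at hb; exact (Finset.mem_sdiff.mp hb).1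
  have hneab : ∀ a ∈ Na, ∀ b ∈ Nb, a ≠ b := by
    intro a ha b hb
    rintro rfl
    rw [hNa] at ha; rw [hNb] at hb
    exact (Finset.mem_sdiff.mp hb).2 (Finset.mem_inter.mp ha).2
  -- flow 1
  have hflow1 : flow π k {x} Na = 1/(k:ℝ) * (π x * Sa / Zc) := by
    unfold flow
    rw [Finset.sum_singleton]
    calc ∑ b ∈ Na, π x * gibbsP π k x b
        = ∑ b ∈ Na, (π x * (1/(k:ℝ)) / Zc) * π b := by
          refine Finset.sum_congr rfl fun b hb => ?_
          rw [hPx b (hmemNa b hb)]; ring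
      _ = (π x * (1/(k:ℝ)) / Zc) * Sa := by rw [← Finset.mul_sum, hSa]
      _ = 1/(k:ℝ) * (π x * Sa / Zc) := by ring
  -- flow 2
  have hflow2 : flow π k Na Nb = 1/(k:ℝ) * (Sa * Sb / Zc) := by
    unfold flow
    calc ∑ a ∈ Na, ∑ b ∈ Nb, π a * gibbsP π k a b
        = ∑ a ∈ Na, ∑ b ∈ Nb, (1/(k:ℝ)/Zc) * (π a * π b) := by
          refine Finset.sum_congr rfl fun a ha => Finset.sum_congr rfl fun b hb => ?_
          rw [hPab a (hmemNa a ha) b (hmemNb b hb) (hneab a ha b hb)]; ring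
      _ = (1/(k:ℝ)/Zc) * (Sa * Sb) := by
          rw [hSa, hSb, Finset.sum_mul_sum, Finset.mul_sum]
          exact Finset.sum_congr rfl fun a _ => by rw [Finset.mul_sum]
      _ = 1/(k:ℝ) * (Sa * Sb / Zc) := by ring
  set W := ∑ z ∈ univ.filter (fun z : Finset (Fin n) => z.card = k ∧ i ∉ z), π z with hW
  -- restricted flow bound
  have hres : W * flowRes π k i Na Nb ≤ 1/(k:ℝ) * (Sa * Sb / (Sa + Sb)) := by
    by_cases hW0 : W = 0
    · rw [hW0, zero_mul]
      have hk0 : (0:ℝ) ≤ 1/(k:ℝ) := by positivity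
      exact mul_nonneg hk0 (div_nonneg (mul_nonneg hSa0 hSb0) (by linarith))
    · have : W * flowRes π k i Na Nb = 1/(k:ℝ) * (Sa * Sb / (Sa + Sb)) := by
        unfold flowRes
        rw [← hW, Finset.mul_sum]
        calc ∑ a ∈ Na, W * ∑ b ∈ Nb, (π a / W) * gibbsPRes π k i a b
            = ∑ a ∈ Na, ∑ b ∈ Nb, (1/(k:ℝ)/(Sa + Sb)) * (π a * π b) := by
              refine Finset.sum_congr rfl fun a ha => ?_
              rw [Finset.mul_sum]
              refine Finset.sum_congr rfl fun b hb => ?_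
              rw [hPres a (hmemNa a ha) b (hmemNb b hb) (hneab a ha b hb), hD]
              rw [mul_comm W, div_mul_eq_mul_div, div_mul_cancel₀ _ hW0]
              ring
          _ = (1/(k:ℝ)/(Sa + Sb)) * (Sa * Sb) := by
              rw [hSa, hSb, Finset.sum_mul_sum, Finset.mul_sum]
              exact Finset.sum_congr rfl fun a _ => by rw [Finset.mul_sum]
          _ = 1/(k:ℝ) * (Sa * Sb / (Sa + Sb)) := by ring
      exact le_of_eq this
  -- conclude
  rw [ge_iff_le, hflow1, hflow2]
  have hkey := key_ineq (π x) Sa Sb (hπ0 x) hSa0 hSb0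
  have hk0 : (0:ℝ) ≤ 1/(k:ℝ) := by positivity
  calc W * flowRes π k i Na Nb
      ≤ 1/(k:ℝ) * (Sa * Sb / (Sa + Sb)) := hres
    _ ≤ 1/(k:ℝ) * (π x * Sa / (π x + Sa + Sb) + Sa * Sb / (π x + Sa + Sb)) :=
        mul_le_mul_of_nonneg_left hkey hk0
    _ = 1/(k:ℝ) * (π x * Sa / Zc) + 1/(k:ℝ) * (Sa * Sb / Zc) := by
        rw [hZeq]; ring
end

section
/- Let π be a discrete k-DPP, S ⊆ Ω with π(S) ≤ 1/2, and S_leave ⊆ S ∩ Ω_n the set of states x ∈ S containing element n such that π(x) + π(N_{n̄,S}(x)) < π(N_{n̄,S̄}(x)), where N_{n̄,S}(x) and N_{n̄,S̄}(x) are the neighbors of x obtained by resampling element n that lie inside and outside S respectively. Then the ergodic flow satisfies Q(S_leave, Ω_n̄ ∖ S_n̄) ≥ π(S_leave)/(4k). -/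
open Finset

/-- Transition density of the lazy Gibbs sampler. -/
noncomputable def lazyGibbsP {n : ℕ} (π : Finset (Fin n) → ℝ) (k : ℕ)
    (x y : Finset (Fin n)) : ℝ :=
  (1 / 2) * (if x = y then 1 else 0) + (1 / 2) * gibbsP π k x y

/-- Ergodic flow of the lazy Gibbs sampler: `Q(A,B) = Σ_{a∈A,b∈B} π(a)P(a,b)`. -/
noncomputable def lazyFlow {n : ℕ} (π : Finset (Fin n) → ℝ) (k : ℕ)
    (A B : Finset (Finset (Fin n))) : ℝ :=
  ∑ a ∈ A, ∑ b ∈ B, π a * lazyGibbsP π k a b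

lemma gramDet_nonneg {n : ℕ} (L : Matrix (Fin n) (Fin n) ℝ) (hL : L.PosSemidef)
    (S : Finset (Fin n)) : 0 ≤ gramDet L S := by
  have h := psd_det_nonneg (hL.submatrix (fun i : {x // x ∈ S} => (i : Fin n)))
  simpa [gramDet, Matrix.submatrix] using h

lemma dpp_nonneg {n : ℕ} {L : Matrix (Fin n) (Fin n) ℝ} (hL : L.PosSemidef) {k : ℕ}
    (hZ : 0 < ∑ T ∈ univ.filter (fun T : Finset (Fin n) => T.card = k), gramDet L T)
    (S : Finset (Fin n)) : 0 ≤ dpp L k S := by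
  unfold dpp
  split
  · exact div_nonneg (gramDet_nonneg L hL S) hZ.le
  · exact le_refl 0


/-- For the lazy Gibbs sampler of a discrete `k`-DPP `π`, a set `S` of states with
`π(S) ≤ 1/2` and the set `S_leave ⊆ S ∩ Ω_e` of states `x` containing `e` with
`π(x) + π(N_{ē,S}(x)) < π(N_{ē,S̄}(x))`, the ergodic flow out of `S_leave` into
`Ω_ē ∖ S_ē` is at least `π(S_leave)/(4k)`. -/
theorem flow_out_of_Sleave {n k : ℕ} (hk : 1 ≤ k) (hkn : k ≤ n)
    (L : Matrix (Fin n) (Fin n) ℝ) (hL : L.PosSemidef)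
    (hZ : 0 < ∑ T ∈ univ.filter (fun T : Finset (Fin n) => T.card = k), gramDet L T)
    (e : Fin n)
    (S : Finset (Finset (Fin n))) (hS : ∀ x ∈ S, x.card = k)
    (hShalf : (∑ x ∈ S, dpp L k x) ≤ 1 / 2)
    (Sleave : Finset (Finset (Fin n)))
    (hSleave : ∀ x : Finset (Fin n), x ∈ Sleave ↔
      (x ∈ S ∧ e ∈ x ∧
        dpp L k x
          + (∑ y ∈ (univ.filter (fun y : Finset (Fin n) =>
              y.card = k ∧ e ∉ y ∧ x.erase e ⊆ y)) ∩ S, dpp L k y)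
        < ∑ y ∈ (univ.filter (fun y : Finset (Fin n) =>
              y.card = k ∧ e ∉ y ∧ x.erase e ⊆ y)) \ S, dpp L k y)) :
    lazyFlow (dpp L k) k Sleave
        ((univ.filter (fun y : Finset (Fin n) => y.card = k ∧ e ∉ y)) \ S)
      ≥ (∑ x ∈ Sleave, dpp L k x) / (4 * (k : ℝ)) := by
  set π := dpp L k with hπ
  have hπ0 : ∀ y, 0 ≤ π y := fun y => dpp_nonneg hL hZ y
  have hcZnn : ∀ I : Finset (Fin n), 0 ≤ condZ π I := fun I =>
    Finset.sum_nonneg fun j _ => hπ0 _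
  set B := (univ.filter (fun y : Finset (Fin n) => y.card = k ∧ e ∉ y)) \ S with hB
  rw [ge_iff_le, Finset.sum_div, lazyFlow]
  apply Finset.sum_le_sum
  intro x hx
  obtain ⟨hxS, hex, hlt⟩ := (hSleave x).1 hx
  have hxcard : x.card = k := hS x hxS
  set I := x.erase e with hI
  set A := univ.filter (fun y : Finset (Fin n) => y.card = k ∧ e ∉ y ∧ I ⊆ y) with hA
  have hIcard : I.card = k - 1 := by rw [hI, Finset.card_erase_of_mem hex, hxcard]
  have heIc : e ∈ Iᶜ := by simp [hI]
  have hcondZ : condZ π I = π x + ∑ y ∈ A, π y := by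
    rw [condZ, ← Finset.insert_erase heIc, Finset.sum_insert (Finset.notMem_erase _ _),
      Finset.insert_erase hex]
    congr 1
    apply Finset.sum_bij (fun j _ => insert j I)
    · intro j hj
      simp only [Finset.mem_erase, Finset.mem_compl] at hj
      simp only [hA, Finset.mem_filter, Finset.mem_univ, true_and]
      refine ⟨?_, ?_, Finset.subset_insert _ _⟩
      · rw [Finset.card_insert_of_notMem hj.2, hIcard]
        omega
      · simp only [Finset.mem_insert, not_or]
        exact ⟨fun h => hj.1 h.symm, Finset.notMem_erase _ _⟩
    · intro j hj j' hj' hjj'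
      simp only [Finset.mem_erase, Finset.mem_compl] at hj hj'
      have : j ∈ insert j' I := hjj' ▸ Finset.mem_insert_self j I
      rcases Finset.mem_insert.1 this with h | h
      · exact h
      · exact absurd h hj.2
    · intro y hy
      simp only [hA, Finset.mem_filter, Finset.mem_univ, true_and] at hy
      obtain ⟨hyk, hey, hIy⟩ := hy
      have hne : (y \ I).Nonempty := by
        rw [← Finset.card_pos, Finset.card_sdiff_of_subset hIy, hyk, hIcard]
        omega
      obtain ⟨j, hj⟩ := hne
      rw [Finset.mem_sdiff] at hj
      have hje : j ≠ e := fun h => hey (h ▸ hj.1)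
      refine ⟨j, ?_, ?_⟩
      · simp only [Finset.mem_erase, Finset.mem_compl]
        exact ⟨hje, hj.2⟩
      · apply Finset.eq_of_subset_of_card_le
        · exact Finset.insert_subset hj.1 hIy
        · rw [Finset.card_insert_of_notMem hj.2, hIcard, hyk]; omega
    · intros; rfl
  have hsplit : (∑ y ∈ A ∩ S, π y) + (∑ y ∈ A \ S, π y) = ∑ y ∈ A, π y :=
    Finset.sum_inter_add_sum_sdiff A S π
  set t := ∑ y ∈ A \ S, π y with ht
  set s := ∑ y ∈ A ∩ S, π y with hs
  have hs0 : 0 ≤ s := Finset.sum_nonneg fun y _ => hπ0 y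
  have hlt2 : π x + s < t := hlt
  have hpx : 0 ≤ π x := hπ0 x
  have ht0 : 0 < t := by linarith
  have hcZ0 : 0 < condZ π I := by rw [hcondZ, ← hsplit]; linarith
  have hcZlt : condZ π I < 2 * t := by rw [hcondZ, ← hsplit]; linarith
  -- termwise lower bound for lazy transition
  have hterm : ∀ y ∈ B, π x * ((1/2) * ((1/(k:ℝ)) *
      (if I ⊆ y ∧ y.card = k then π y / condZ π I else 0))) ≤ π x * lazyGibbsP π k x y := by
    intro y hy
    have hxy : x ≠ y := fun h => ((Finset.mem_sdiff.1 hy).2 (h ▸ hxS))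
    rw [lazyGibbsP, if_neg hxy, mul_zero, zero_add]
    apply mul_le_mul_of_nonneg_left _ hpx
    rw [gibbsP]
    have hsingle : (if I ⊆ y ∧ y.card = k then π y / condZ π I else 0) ≤
        ∑ i ∈ x, (if x.erase i ⊆ y ∧ y.card = k then π y / condZ π (x.erase i) else 0) :=
      Finset.single_le_sum (f := fun i =>
        if x.erase i ⊆ y ∧ y.card = k then π y / condZ π (x.erase i) else 0)
      (fun i _ => by
        split
        · exact div_nonneg (hπ0 y) (hcZnn _)
        · exact le_refl 0) hex
    exact mul_le_mul_of_nonneg_left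
      (mul_le_mul_of_nonneg_left hsingle (by positivity)) (by norm_num)
  calc π x / (4 * (k : ℝ))
      ≤ π x * ((1/2) * ((1/(k:ℝ)) * (t / condZ π I))) := by
        have h12 : (1/2 : ℝ) ≤ t / condZ π I := by
          rw [le_div_iff₀ hcZ0]; linarith
        have hk0 : (0:ℝ) < (k:ℝ) := by exact_mod_cast hk
        have : π x / (4 * (k : ℝ)) = π x * ((1/2) * ((1/(k:ℝ)) * (1/2))) := by
          rw [div_eq_mul_inv]
          congr 1
          rw [mul_inv]
          ring
        rw [this]
        apply mul_le_mul_of_nonneg_left _ hpx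
        apply mul_le_mul_of_nonneg_left _ (by norm_num)
        exact mul_le_mul_of_nonneg_left h12 (by positivity)
    _ = ∑ y ∈ B, π x * ((1/2) * ((1/(k:ℝ)) *
          (if I ⊆ y ∧ y.card = k then π y / condZ π I else 0))) := by
        have hfilter : B.filter (fun y => I ⊆ y ∧ y.card = k) = A \ S := by
          ext y
          simp only [hB, hA, Finset.mem_filter, Finset.mem_sdiff, Finset.mem_univ, true_and]
          tauto
        rw [← Finset.mul_sum, ← Finset.mul_sum, ← Finset.mul_sum,
          ← Finset.sum_filter, hfilter, ← Finset.sum_div]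
    _ ≤ ∑ y ∈ B, π x * lazyGibbsP π k x y := Finset.sum_le_sum hterm
end
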